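/- arXiv:2509.20559 — 5 statements merged into one kernel-verified Lean document; each statement's English description precedes it below -/
import Mathlib

section
/- If H = Δ_p + V is a positive quasilinear Schrödinger operator associated to a graph b over (X,m) with potential V : X → ℝ, and u ∈ F_b(X) is H-subharmonic, then u₊ := max(u,0) is H-subharmonic. -/
open Real Filter

noncomputable section

attribute [local instance] Classical.propDecidable

/-- Signed power `a^⟨r⟩ = |a|^(r-1)·a`, with `0^⟨r⟩ = 0`. -/
def spow (r a : ℝ) : ℝ := if a = 0 then 0 else |a| ^ (r - 1) * a

/-- `b` is a (weighted, row-summable) graph over `X`. -/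
def IsGraph {X : Type*} (b : X → X → ℝ) : Prop :=
  (∀ x y, 0 ≤ b x y) ∧ (∀ x y, b x y = b y x) ∧ (∀ x, b x x = 0) ∧
    ∀ x, Summable fun y => b x y

/-- Connectedness: any two vertices are joined by a path of positive-weight edges. -/
def GraphConnected {X : Type*} (b : X → X → ℝ) : Prop :=
  ∀ x y, Relation.ReflTransGen (fun u v => 0 < b u v) x y

/-- Membership in `F_b(X)`. -/
def inF {X : Type*} (p : ℝ) (b : X → X → ℝ) (f : X → ℝ) : Prop :=
  ∀ x, Summable fun y => b x y * |f x - f y| ^ (p - 1)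

/-- The weighted `p`-Laplacian. -/
def pLap {X : Type*} (p : ℝ) (b : X → X → ℝ) (m : X → ℝ) (f : X → ℝ) (x : X) : ℝ :=
  (1 / m x) * ∑' y, b x y * spow (p - 1) (f x - f y)

/-- The quasilinear Schrödinger operator `H = Δ_p + V`. -/
def schrodOp {X : Type*} (p : ℝ) (b : X → X → ℝ) (m V : X → ℝ) (f : X → ℝ) (x : X) : ℝ :=
  pLap p b m f x + V x * spow (p - 1) (f x)

/-- The energy functional `Q_{p,b,m,V}`. -/
def pEnergy {X : Type*} (p : ℝ) (b : X → X → ℝ) (m V : X → ℝ) (φ : X → ℝ) : ℝ :=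
  (1 / 2) * (∑' z : X × X, b z.1 z.2 * |φ z.1 - φ z.2| ^ p)
    + ∑' x, m x * V x * |φ x| ^ p

/-- Positivity of `H`: existence of a positive `H`-superharmonic function. -/
def IsPositiveOp {X : Type*} (p : ℝ) (b : X → X → ℝ) (m V : X → ℝ) : Prop :=
  ∃ w : X → ℝ, inF p b w ∧ (∀ x, 0 ≤ w x) ∧ w ≠ 0 ∧ ∀ x, 0 ≤ schrodOp p b m V w x

/-- Subcriticality of the energy functional. -/
def pSubcritical {X : Type*} (p : ℝ) (b : X → X → ℝ) (m V : X → ℝ) : Prop :=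
  ∃ W : X → ℝ, (∀ x, 0 ≤ W x) ∧ W ≠ 0 ∧
    ∀ φ : X → ℝ, (Function.support φ).Finite →
      0 ≤ pEnergy p b m (fun x => V x - W x) φ

/-- Criticality: the energy functional is nonnegative but not subcritical. -/
def pCritical {X : Type*} (p : ℝ) (b : X → X → ℝ) (m V : X → ℝ) : Prop :=
  (∀ φ : X → ℝ, (Function.support φ).Finite → 0 ≤ pEnergy p b m V φ) ∧
    ¬ pSubcritical p b m V

/-- `v` is an Agmon ground state: strictly positive, harmonic, and every positive
superharmonic function is a positive multiple of it. -/
def IsAgmonGroundState {X : Type*} (p : ℝ) (b : X → X → ℝ) (m V : X → ℝ)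
    (v : X → ℝ) : Prop :=
  (∀ x, 0 < v x) ∧ inF p b v ∧ (∀ x, schrodOp p b m V v x = 0) ∧
    ∀ w : X → ℝ, inF p b w → (∀ x, 0 ≤ w x) → w ≠ 0 →
      (∀ x, 0 ≤ schrodOp p b m V w x) → ∃ c : ℝ, 0 < c ∧ ∀ x, w x = c * v x

/-- `G` is the minimal positive Green function of `Δ_p + α` with pole `o`. -/
def IsGreenFunction {X : Type*} (p : ℝ) (b : X → X → ℝ) (m : X → ℝ) (α : ℝ)
    (o : X) (G : X → ℝ) : Prop :=
  (∀ x, 0 < G x) ∧ inF p b G ∧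
    (∀ x, schrodOp p b m (fun _ => α) G x = if x = o then 1 else 0) ∧
    ∀ φ : X → ℝ, inF p b φ → (∀ x, 0 < φ x) →
      (∀ x, schrodOp p b m (fun _ => α) φ x = if x = o then 1 else 0) →
      ∀ x, G x ≤ φ x

/-- `u` is a positive solution of `H[u] = 0` of minimal growth at infinity. -/
def PositiveMinimalGrowth {X : Type*} (p : ℝ) (b : X → X → ℝ) (m V : X → ℝ)
    (u : X → ℝ) : Prop :=
  (∀ x, 0 < u x) ∧ inF p b u ∧
    ∃ K₀ : Set X, K₀.Finite ∧ (∀ x ∉ K₀, schrodOp p b m V u x = 0) ∧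
      ∀ K : Set X, K.Finite → K₀ ⊆ K →
        ∀ v : X → ℝ, inF p b v → (∀ x, 0 < v x) →
          (∀ x ∉ K, 0 ≤ schrodOp p b m V v x) → (∀ x ∈ K, u x ≤ v x) →
          ∀ x ∉ K, u x ≤ v x

/-- Combinatorial graph distance from `o` to `x`. -/
def gdist {X : Type*} (b : X → X → ℝ) (o x : X) : ℕ :=
  sInf {n : ℕ | ∃ w : ℕ → X, w 0 = o ∧ w n = x ∧ ∀ i < n, 0 < b (w i) (w (i + 1))}

/-- Total edge weight `∂_b B_k(o)` between the spheres of radii `k` and `k+1`. -/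
def sphereBoundary {X : Type*} (b : X → X → ℝ) (o : X) (k : ℕ) : ℝ :=
  ∑' z : X × X, if gdist b o z.1 = k ∧ gdist b o z.2 = k + 1 then b z.1 z.2 else 0

/-- Model graph: the inner and outer curvatures are spherically symmetric. -/
def IsModelGraph {X : Type*} (b : X → X → ℝ) (m : X → ℝ) (o : X) : Prop :=
  ∀ x y, gdist b o x = gdist b o y →
    ((1 / m x) * (∑' z, if gdist b o z = gdist b o x + 1 then b x z else 0)
        = (1 / m y) * (∑' z, if gdist b o z = gdist b o y + 1 then b y z else 0)) ∧
    ((1 / m x) * (∑' z, if gdist b o z + 1 = gdist b o x then b x z else 0)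
        = (1 / m y) * (∑' z, if gdist b o z + 1 = gdist b o y then b y z else 0))

/-- The Green function of a subcritical model graph:
`G₀(x) = ∑_{k=|x|}^∞ (m(o)/∂_bB_k(o))^{1/(p-1)}`. -/
def modelGreen {X : Type*} (p : ℝ) (b : X → X → ℝ) (m : X → ℝ) (o : X) (x : X) : ℝ :=
  ∑' k : ℕ, (m o / sphereBoundary b o (gdist b o x + k)) ^ (1 / (p - 1))

/-- The `d`-regular tree with standard weights, root `o` and distance function `ℓ`. -/
def IsRegularTree {X : Type*} (d : ℕ) (b : X → X → ℝ) (o : X) (ℓ : X → ℕ) : Prop :=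
  (∀ x y, b x y = b y x) ∧ (∀ x, b x x = 0) ∧ (∀ x y, b x y = 0 ∨ b x y = 1) ∧
    ℓ o = 0 ∧
    (∀ x, {y | b x y = 1 ∧ ℓ y = ℓ x + 1}.ncard = d) ∧
    (∀ x, x ≠ o → {y | b x y = 1 ∧ ℓ y + 1 = ℓ x}.ncard = 1) ∧
    (∀ x y, b x y = 1 → ℓ y = ℓ x + 1 ∨ ℓ x = ℓ y + 1)

/-- The simplified energy functional `E_u(φ)`. -/
def simpEnergy {X : Type*} (p : ℝ) (b : X → X → ℝ) (u φ : X → ℝ) : ℝ :=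
  ∑' z : X × X,
    b z.1 z.2 * (u z.1 * u z.2) * |φ z.1 - φ z.2| ^ 2 *
      (|u z.1 - u z.2| * ((|φ z.1| + |φ z.2|) / 2)
        + (u z.1 * u z.2) ^ ((1 : ℝ) / 2) * |φ z.1 - φ z.2|) ^ (p - 2)

lemma spow_zero (r : ℝ) : spow r 0 = 0 := by simp [spow]

lemma spow_of_nonneg {r a : ℝ} (hr : r ≠ 0) (ha : 0 ≤ a) : spow r a = a ^ r := by
  rcases eq_or_lt_of_le ha with h | h
  · simp [spow, ← h, Real.zero_rpow hr]
  · rw [spow, if_neg h.ne', abs_of_pos h]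
    rw [← Real.rpow_add_one h.ne' (r - 1)]
    ring_nf

lemma spow_neg (r a : ℝ) : spow r (-a) = - spow r a := by
  by_cases ha : a = 0
  · simp [ha, spow]
  · rw [spow, spow, if_neg (neg_ne_zero.mpr ha), if_neg ha, abs_neg]; ring

lemma spow_nonneg {r a : ℝ} (hr : r ≠ 0) (ha : 0 ≤ a) : 0 ≤ spow r a := by
  rw [spow_of_nonneg hr ha]; exact Real.rpow_nonneg ha r

lemma spow_nonpos {r a : ℝ} (hr : r ≠ 0) (ha : a ≤ 0) : spow r a ≤ 0 := by
  have := spow_nonneg hr (neg_nonneg.mpr ha)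
  rw [spow_neg] at this; linarith

lemma abs_spow {r : ℝ} (hr : r ≠ 0) (a : ℝ) : |spow r a| = |a| ^ r := by
  by_cases ha : a = 0
  · simp [ha, spow, Real.zero_rpow hr]
  · rw [spow, if_neg ha, abs_mul, abs_of_nonneg (Real.rpow_nonneg (abs_nonneg a) _),
      ← Real.rpow_add_one (abs_ne_zero.mpr ha) (r - 1)]
    ring_nf

lemma spow_mono {r : ℝ} (hr : 0 < r) : Monotone (spow r) := by
  intro a c hac
  rcases le_total 0 a with ha | ha
  · rw [spow_of_nonneg hr.ne' ha, spow_of_nonneg hr.ne' (ha.trans hac)]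
    exact Real.rpow_le_rpow ha hac hr.le
  · rcases le_total 0 c with hc | hc
    · exact (spow_nonpos hr.ne' ha).trans (spow_nonneg hr.ne' hc)
    · have h1 : spow r (-c) ≤ spow r (-a) := by
        rw [spow_of_nonneg hr.ne' (neg_nonneg.mpr hc),
          spow_of_nonneg hr.ne' (neg_nonneg.mpr ha)]
        exact Real.rpow_le_rpow (neg_nonneg.mpr hc) (by linarith) hr.le
      rw [spow_neg, spow_neg] at h1; linarith

/-- the positive part of an `H`-subharmonic function is `H`-subharmonic. -/
theorem pos_part_subharmonic
    {X : Type} [Countable X] [Infinite X]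
    (p : ℝ) (hp : 1 < p) (m : X → ℝ) (hm : ∀ x, 0 < m x)
    (b : X → X → ℝ) (hb : IsGraph b) (V : X → ℝ)
    (hpos : IsPositiveOp p b m V)
    (u : X → ℝ) (hu : inF p b u)
    (hsub : ∀ x, schrodOp p b m V u x ≤ 0) :
    inF p b (fun x => max (u x) 0) ∧
      ∀ x, schrodOp p b m V (fun x => max (u x) 0) x ≤ 0 := by
  obtain ⟨hb0, hbsymm, hbdiag, hbsum⟩ := hb
  have hr : (0 : ℝ) < p - 1 := by linarith
  set F : X → ℝ := fun x => max (u x) 0 with hF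
  -- Part 1 : inF
  have hinF : inF p b F := by
    intro x
    apply Summable.of_nonneg_of_le _ _ (hu x)
    · intro y
      exact mul_nonneg (hb0 x y) (Real.rpow_nonneg (abs_nonneg _) _)
    · intro y
      refine mul_le_mul_of_nonneg_left ?_ (hb0 x y)
      exact Real.rpow_le_rpow (abs_nonneg _) (abs_max_sub_max_le_abs _ _ _) hr.le
  refine ⟨hinF, ?_⟩
  intro x
  have hsumm : ∀ (g : X → ℝ), (∀ y, Summable fun z => b y z * |g y - g z| ^ (p - 1)) →
      Summable fun y => b x y * spow (p - 1) (g x - g y) := by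
    intro g hg
    rw [← summable_abs_iff]
    have : (fun y => |b x y * spow (p - 1) (g x - g y)|)
        = fun y => b x y * |g x - g y| ^ (p - 1) := by
      funext y
      rw [abs_mul, abs_of_nonneg (hb0 x y), abs_spow hr.ne']
    rw [this]; exact hg x
  have hS1 : Summable fun y => b x y * spow (p - 1) (F x - F y) := hsumm F hinF
  by_cases hx : 0 < u x
  · have hFx : F x = u x := max_eq_left hx.le
    have hS2 : Summable fun y => b x y * spow (p - 1) (u x - u y) := hsumm u hu
    have key : (∑' y, b x y * spow (p - 1) (F x - F y))
        ≤ ∑' y, b x y * spow (p - 1) (u x - u y) := by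
      refine Summable.tsum_le_tsum (fun y => ?_) hS1 hS2
      refine mul_le_mul_of_nonneg_left (spow_mono hr ?_) (hb0 x y)
      have : u y ≤ F y := le_max_left _ _
      rw [hFx]; linarith
    have := hsub x
    unfold schrodOp pLap at this ⊢
    have hFx' : spow (p - 1) (F x) = spow (p - 1) (u x) := by rw [hFx]
    rw [hFx']
    have hm' : 0 ≤ 1 / m x := (one_div_pos.mpr (hm x)).le
    have := mul_le_mul_of_nonneg_left key hm'
    linarith [hsub x, mul_le_mul_of_nonneg_left key hm']
  · have hFx : F x = 0 := max_eq_right (not_lt.mp hx)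
    unfold schrodOp pLap
    rw [hFx, spow_zero, mul_zero, add_zero]
    have ht : (∑' y, b x y * spow (p - 1) (0 - F y)) ≤ 0 := by
      refine tsum_nonpos fun y => ?_
      refine mul_nonpos_iff.mpr (Or.inl ⟨hb0 x y, ?_⟩)
      refine spow_nonpos hr.ne' ?_
      simp only [zero_sub, neg_nonpos]
      exact le_max_right (u y) 0
    have hm' : 0 ≤ 1 / m x := (one_div_pos.mpr (hm x)).le
    calc (1 / m x) * ∑' y, b x y * spow (p - 1) (0 - F y)
        ≤ (1 / m x) * 0 := mul_le_mul_of_nonneg_left ht hm'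
      _ = 0 := by ring
end
end

section
/- Anti-tree asymptotics: Let p > 1, γ > 0, and let b be the anti-tree with sphere sizes #S_r ≍ r^γ for r ≥ 1 (in particular with #S_{r+1} = ⌈r^γ⌉ for r ≥ 1 and #S_1 = 1). Then: (i) ∂_bB_r(o) ≍ r^{2γ} for r ≥ 1; (ii) the p-Laplacian on the anti-tree is subcritical if and only if γ > (p-1)/2; (iii) if γ > (p-1)/2, then the minimal positive Green function satisfies G₀(z) ≍ |z|^{-(2γ-p+1)/(p-1)} for z ≠ o. -/
open Real Filter

noncomputable section

attribute [local instance] Classical.propDecidable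

/-!
All the analysis is radial. The energy of the anti-tree is a sum over the pairs of consecutive
spheres `S_k × S_{k+1}`, and by Jensen's inequality replacing `φ` by its sphere averages does not
increase it; this reduces everything to the half-line with edge weights
`w_k = #S_k · #S_{k+1} ≍ k^{2γ}` and edge resistances `r_k = w_k^{-1/(p-1)} ≍ k^{-2γ/(p-1)}`.
There, Hölder's inequality applied to a telescoping sum gives the Hardy inequality
`|a_0|^p ≤ (∑ r_k)^{p-1} ∑ w_k |a_k - a_{k+1}|^p`, so a point mass at `o` can be subtracted when
`∑ r_k < ∞`; when `∑ r_k = ∞`, normalised tail sums of `r_k` are cutoffs equal to `1` at any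
given sphere with arbitrarily small energy, so no positive `W` can be subtracted. Hence
subcriticality holds iff `2γ/(p-1) > 1`, and then `G₀(z) = ∑_{k ≥ |z|} r_k ≍ |z|^{1-2γ/(p-1)}`.
-/

open Finset
open scoped BigOperators

lemma rpow_sum_le_rpow_sum_mul_sum_rpow {ι : Type*} {p : ℝ} (hp : 1 ≤ p) (s : Finset ι)
    {t d : ι → ℝ} (ht : ∀ i ∈ s, 0 < t i) (hd : ∀ i ∈ s, 0 ≤ d i) :
    (∑ i ∈ s, d i) ^ p ≤ (∑ i ∈ s, t i) ^ (p - 1) * ∑ i ∈ s, t i ^ (1 - p) * d i ^ p := by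
  rcases s.eq_empty_or_nonempty with rfl | hs
  · simp [Real.zero_rpow (by positivity : p ≠ 0)]
  set T := ∑ i ∈ s, t i
  have hT : 0 < T := sum_pos ht hs
  -- Jensen for the probability weights `t i / T` applied to `d i * T / t i`
  have jensen := Real.rpow_arith_mean_le_arith_mean_rpow s (fun i => t i / T)
    (fun i => d i * T / t i) (fun i hi => by have := ht i hi; positivity)
    (by rw [← sum_div, div_self hT.ne'])
    (fun i hi => by have := ht i hi; have := hd i hi; positivity) hp
  have hmean : ∀ i ∈ s, t i / T * (d i * T / t i) = d i := fun i hi => by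
    have := (ht i hi).ne'; field_simp
  rw [sum_congr rfl hmean] at jensen
  refine jensen.trans_eq ?_
  rw [mul_sum]
  refine sum_congr rfl fun i hi => ?_
  have hti := ht i hi
  rw [Real.div_rpow (mul_nonneg (hd i hi) hT.le) hti.le, Real.mul_rpow (hd i hi) hT.le,
    Real.rpow_sub hT, Real.rpow_sub hti, Real.rpow_one, Real.rpow_one]
  field_simp

section HalfLine

variable {p : ℝ} {w : ℕ → ℝ}

lemma one_div_rpow_one_div_sub_one_rpow_one_sub (hp : 1 < p) {v : ℝ} (hv : 0 < v) :
    ((1 / v) ^ (1 / (p - 1))) ^ (1 - p) = v := by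
  rw [← Real.rpow_mul (by positivity), show 1 / (p - 1) * (1 - p) = -1 by
    field_simp [(sub_pos.2 hp).ne']; ring, Real.rpow_neg_one, one_div, inv_inv]

lemma mul_one_div_rpow_one_div_sub_one_rpow (hp : 1 < p) {v : ℝ} (hv : 0 < v) :
    v * ((1 / v) ^ (1 / (p - 1))) ^ p = (1 / v) ^ (1 / (p - 1)) := by
  set r := (1 / v) ^ (1 / (p - 1))
  have hr : 0 < r := by positivity
  calc v * r ^ p = r ^ (1 - p) * r ^ p := by
        rw [one_div_rpow_one_div_sub_one_rpow_one_sub hp hv]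
    _ = r := by rw [← Real.rpow_add hr]; simp

lemma halfLine_hardy (hp : 1 < p) (hw : ∀ k, 0 < w k)
    (hsum : Summable fun k => (1 / w k) ^ (1 / (p - 1))) (a : ℕ → ℝ) {R : ℕ} (haR : a R = 0) :
    |a 0| ^ p ≤ (∑' k, (1 / w k) ^ (1 / (p - 1))) ^ (p - 1) *
      ∑ k ∈ range R, w k * |a k - a (k + 1)| ^ p := by
  set t := fun k => (1 / w k) ^ (1 / (p - 1))
  have ht : ∀ k, 0 < t k := fun k => by have := hw k; positivity
  have htelescope : |a 0| ≤ ∑ k ∈ range R, |a k - a (k + 1)| := by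
    rw [← sub_zero (a 0), ← haR, ← sum_range_sub']
    exact abs_sum_le_sum_abs _ _
  calc |a 0| ^ p ≤ (∑ k ∈ range R, |a k - a (k + 1)|) ^ p :=
        Real.rpow_le_rpow (abs_nonneg _) htelescope (by linarith)
    _ ≤ (∑ k ∈ range R, t k) ^ (p - 1) *
          ∑ k ∈ range R, t k ^ (1 - p) * |a k - a (k + 1)| ^ p :=
        rpow_sum_le_rpow_sum_mul_sum_rpow hp.le _ (fun k _ => ht k) (fun k _ => abs_nonneg _)
    _ ≤ (∑' k, t k) ^ (p - 1) * ∑ k ∈ range R, w k * |a k - a (k + 1)| ^ p := by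
        simp only [t, one_div_rpow_one_div_sub_one_rpow_one_sub hp (hw _)]
        refine mul_le_mul_of_nonneg_right (Real.rpow_le_rpow (sum_nonneg fun k _ => (ht k).le)
          (hsum.sum_le_tsum _ fun k _ => (ht k).le) (by linarith))
          (sum_nonneg fun k _ => mul_nonneg (hw k).le (by positivity))

lemma halfLine_exists_cutoff (hp : 1 < p) (hw : ∀ k, 0 < w k)
    (hdiv : ¬ Summable fun k => (1 / w k) ^ (1 / (p - 1))) (n₀ : ℕ) {ε : ℝ} (hε : 0 < ε) :
    ∃ M : ℕ, ∃ f : ℕ → ℝ, f n₀ = 1 ∧ (∀ k, M ≤ k → f k = 0) ∧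
      ∑ k ∈ range M, w k * |f k - f (k + 1)| ^ p ≤ ε := by
  set t := fun k => if n₀ ≤ k then (1 / w k) ^ (1 / (p - 1)) else 0
  have ht : ∀ k, 0 ≤ t k := fun k => by
    have := hw k; simp only [t]; split_ifs <;> positivity
  have hwt : ∀ k, w k * t k ^ p = t k := fun k => by
    simp only [t]; split_ifs
    · exact mul_one_div_rpow_one_div_sub_one_rpow hp (hw k)
    · rw [Real.zero_rpow (by linarith), mul_zero]
  have hdiv' : ¬ Summable t := fun ht_sum => hdiv <| by
    refine (ht_sum.add (summable_of_ne_finset_zero (s := range n₀)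
      (f := fun k => if n₀ ≤ k then 0 else (1 / w k) ^ (1 / (p - 1))) ?_)).congr fun k => ?_
    · intro k hk; simp_all
    · simp only [t]; split_ifs <;> simp
  obtain ⟨M, hM⟩ := (((not_summable_iff_tendsto_nat_atTop_of_nonneg ht).1
    hdiv').eventually_ge_atTop (ε ^ (1 / (1 - p)))).exists
  set T := ∑ k ∈ range M, t k
  have hT : 0 < T := lt_of_lt_of_le (by positivity) hM
  have hn₀M : n₀ < M := by
    by_contra! h
    refine hT.ne' (sum_eq_zero fun k hk => ?_)
    simp only [t, if_neg (by simp at hk; omega : ¬ n₀ ≤ k)]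
  refine ⟨M, fun k => (∑ j ∈ Ico k M, t j) / T, ?_,
    fun k hk => by simp [Ico_eq_empty_of_le hk], ?_⟩
  · have htail : ∑ j ∈ Ico n₀ M, t j = T := by
      rw [← zero_add (∑ j ∈ Ico n₀ M, t j), ← sum_eq_zero (s := Ico 0 n₀) (f := t),
        sum_Ico_consecutive t (Nat.zero_le n₀) hn₀M.le, ← range_eq_Ico]
      intro k hk; simp only [t, if_neg (by simp at hk; omega : ¬ n₀ ≤ k)]
    simp only [htail, div_self hT.ne']
  · calc ∑ k ∈ range M, w k * |(∑ j ∈ Ico k M, t j) / T - (∑ j ∈ Ico (k + 1) M, t j) / T| ^ p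
        = ∑ k ∈ range M, t k / T ^ p := sum_congr rfl fun k hk => by
          rw [sum_eq_sum_Ico_succ_bot (mem_range.1 hk), add_div, add_sub_cancel_right,
            abs_of_nonneg (div_nonneg (ht k) hT.le), Real.div_rpow (ht k) hT.le, ← mul_div_assoc,
            hwt]
      _ = T ^ (1 - p) := by rw [← sum_div, Real.rpow_sub hT, Real.rpow_one]
      _ ≤ (ε ^ (1 / (1 - p))) ^ (1 - p) :=
          Real.rpow_le_rpow_of_nonpos (by positivity) hM (by linarith)
      _ = ε := by
        rw [← Real.rpow_mul hε.le, div_mul_cancel₀ _ (by linarith : (1 : ℝ) - p ≠ 0), Real.rpow_one]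

end HalfLine

section Series

variable {β : ℝ}

lemma rpow_neg_add_one_le_sub (hβ : 1 ≤ β) {a : ℝ} (ha : 0 < a) :
    (β - 1) * (a + 1) ^ (-β) ≤ a ^ (1 - β) - (a + 1) ^ (1 - β) := by
  have hbern : 1 + β * (1 / a) ≤ ((a + 1) / a) ^ β := by
    simpa [add_div, div_self ha.ne'] using
      one_add_mul_self_le_rpow_one_add (by linarith [one_div_pos.2 ha] : (-1 : ℝ) ≤ 1 / a) hβ
  rw [Real.div_rpow (by positivity) ha.le, le_div_iff₀ (by positivity)] at hbern
  have key : (a + β) * a ^ β ≤ a * (a + 1) ^ β := by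
    calc (a + β) * a ^ β = a * ((1 + β * (1 / a)) * a ^ β) := by field_simp
      _ ≤ a * (a + 1) ^ β := by gcongr
  rw [Real.rpow_neg (by positivity), Real.rpow_sub ha, Real.rpow_sub (by positivity),
    Real.rpow_one, Real.rpow_one]
  field_simp
  linarith

lemma summable_nat_add_rpow_neg (hβ : 1 < β) (n : ℕ) :
    Summable fun k : ℕ => ((n + k : ℕ) : ℝ) ^ (-β) :=
  ((summable_nat_add_iff n).2 (Real.summable_nat_rpow.2 (neg_lt_neg hβ))).congr
    fun k => by rw [add_comm]

lemma tsum_nat_add_rpow_neg_le (hβ : 1 < β) {n : ℕ} (hn : 0 < n) :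
    ∑' k : ℕ, ((n + k : ℕ) : ℝ) ^ (-β) ≤ β / (β - 1) * (n : ℝ) ^ (1 - β) := by
  have hn' : (0 : ℝ) < n := by exact_mod_cast hn
  have htail : ∑' k : ℕ, ((n + (k + 1) : ℕ) : ℝ) ^ (-β) ≤ (n : ℝ) ^ (1 - β) / (β - 1) := by
    refine Real.tsum_le_of_sum_range_le (fun k => by positivity) fun m => ?_
    rw [le_div_iff₀ (by linarith), sum_mul]
    calc ∑ k ∈ range m, ((n + (k + 1) : ℕ) : ℝ) ^ (-β) * (β - 1)
        ≤ ∑ k ∈ range m, (((n + k : ℕ) : ℝ) ^ (1 - β) - ((n + (k + 1) : ℕ) : ℝ) ^ (1 - β)) :=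
          sum_le_sum fun k _ => by
            rw [mul_comm]; push_cast
            rw [← add_assoc]
            exact rpow_neg_add_one_le_sub hβ.le (by positivity)
      _ ≤ (n : ℝ) ^ (1 - β) := by
          rw [sum_range_sub' (fun k => ((n + k : ℕ) : ℝ) ^ (1 - β))]
          simpa using Real.rpow_nonneg (Nat.cast_nonneg (n + m)) (1 - β)
  have hhead : (n : ℝ) ^ (-β) ≤ (n : ℝ) ^ (1 - β) :=
    Real.rpow_le_rpow_of_exponent_le (by exact_mod_cast hn) (by linarith)
  rw [(summable_nat_add_rpow_neg hβ n).tsum_eq_zero_add]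
  calc ((n + 0 : ℕ) : ℝ) ^ (-β) + ∑' k : ℕ, ((n + (k + 1) : ℕ) : ℝ) ^ (-β)
      ≤ (n : ℝ) ^ (1 - β) + (n : ℝ) ^ (1 - β) / (β - 1) := by
        simpa using add_le_add hhead htail
    _ = β / (β - 1) * (n : ℝ) ^ (1 - β) := by field_simp [(by linarith : β - 1 ≠ 0)]; ring

lemma two_rpow_neg_mul_le_tsum_nat_add_rpow_neg (hβ : 1 < β) {n : ℕ} (hn : 0 < n) :
    2 ^ (-β) * (n : ℝ) ^ (1 - β) ≤ ∑' k : ℕ, ((n + k : ℕ) : ℝ) ^ (-β) := by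
  have hn' : (0 : ℝ) < n := by exact_mod_cast hn
  calc 2 ^ (-β) * (n : ℝ) ^ (1 - β) = ∑ k ∈ range n, ((2 * n : ℕ) : ℝ) ^ (-β) := by
        rw [sum_const, card_range, nsmul_eq_mul, Nat.cast_mul, Nat.cast_ofNat,
          Real.mul_rpow zero_le_two hn'.le, show 1 - β = 1 + -β by ring, Real.rpow_add hn',
          Real.rpow_one]
        ring
    _ ≤ ∑ k ∈ range n, ((n + k : ℕ) : ℝ) ^ (-β) := sum_le_sum fun k hk => by
        refine Real.rpow_le_rpow_of_nonpos (by positivity) ?_ (by linarith)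
        exact_mod_cast (by simp at hk; omega : n + k ≤ 2 * n)
    _ ≤ ∑' k : ℕ, ((n + k : ℕ) : ℝ) ^ (-β) :=
        (summable_nat_add_rpow_neg hβ n).sum_le_tsum _ fun k _ => by positivity

end Series

section Comparison

variable {f : ℕ → ℝ} {c C β : ℝ}

lemma summable_iff_of_rpow_bounds (hc : 0 < c)
    (hf : ∀ k : ℕ, 1 ≤ k → c * (k : ℝ) ^ (-β) ≤ f k ∧ f k ≤ C * (k : ℝ) ^ (-β)) :
    Summable f ↔ 1 < β := by
  have hpow : ∀ k : ℕ, 0 ≤ ((k + 1 : ℕ) : ℝ) ^ (-β) := fun k => by positivity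
  rw [← summable_nat_add_iff 1]
  constructor
  · intro hs
    have hs' : Summable fun k : ℕ => ((k + 1 : ℕ) : ℝ) ^ (-β) :=
      (hs.mul_left c⁻¹).of_nonneg_of_le hpow fun k => by
        rw [le_inv_mul_iff₀ hc]; exact (hf (k + 1) (by omega)).1
    have := Real.summable_nat_rpow.1 ((summable_nat_add_iff 1).1 hs')
    linarith
  · intro hβ
    refine ((summable_nat_add_rpow_neg hβ 1).mul_left C).of_nonneg_of_le
      (fun k => (mul_nonneg hc.le (hpow k)).trans (hf (k + 1) (by omega)).1) fun k => ?_
    rw [add_comm 1 k]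
    exact (hf (k + 1) (by omega)).2

lemma tsum_nat_add_bounds_of_rpow_bounds (hc : 0 < c) (hβ : 1 < β)
    (hf : ∀ k : ℕ, 1 ≤ k → c * (k : ℝ) ^ (-β) ≤ f k ∧ f k ≤ C * (k : ℝ) ^ (-β)) {n : ℕ}
    (hn : 0 < n) :
    c * 2 ^ (-β) * (n : ℝ) ^ (1 - β) ≤ ∑' k, f (n + k) ∧
      ∑' k, f (n + k) ≤ C * (β / (β - 1)) * (n : ℝ) ^ (1 - β) := by
  have hg := summable_nat_add_rpow_neg hβ n
  have hlo : ∀ k, c * ((n + k : ℕ) : ℝ) ^ (-β) ≤ f (n + k) := fun k => (hf _ (by omega)).1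
  have hup : ∀ k, f (n + k) ≤ C * ((n + k : ℕ) : ℝ) ^ (-β) := fun k => (hf _ (by omega)).2
  have hfs : Summable fun k => f (n + k) :=
    (hg.mul_left C).of_nonneg_of_le (fun k => (by positivity : (0 : ℝ) ≤ _).trans (hlo k)) hup
  have hC : 0 ≤ C :=
    hc.le.trans (le_of_mul_le_mul_right ((hlo 0).trans (hup 0)) (by positivity))
  constructor
  · calc c * 2 ^ (-β) * (n : ℝ) ^ (1 - β) ≤ c * ∑' k : ℕ, ((n + k : ℕ) : ℝ) ^ (-β) := by
          rw [mul_assoc]; gcongr; exact two_rpow_neg_mul_le_tsum_nat_add_rpow_neg hβ hn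
      _ ≤ ∑' k, f (n + k) := by
          rw [← tsum_mul_left]; exact (hg.mul_left c).tsum_le_tsum hlo hfs
  · calc ∑' k, f (n + k) ≤ C * ∑' k : ℕ, ((n + k : ℕ) : ℝ) ^ (-β) := by
          rw [← tsum_mul_left]; exact hfs.tsum_le_tsum hup (hg.mul_left C)
      _ ≤ C * (β / (β - 1)) * (n : ℝ) ^ (1 - β) := by
          rw [mul_assoc]; gcongr; exact tsum_nat_add_rpow_neg_le hβ hn

lemma one_div_rpow_bounds {w x c C q : ℝ} (hc : 0 < c) (hx : 0 < x) (hq : 0 ≤ q)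
    (hlo : c * x ≤ w) (hup : w ≤ C * x) :
    C ^ (-q) * x ^ (-q) ≤ (1 / w) ^ q ∧ (1 / w) ^ q ≤ c ^ (-q) * x ^ (-q) := by
  have hw : 0 < w := lt_of_lt_of_le (by positivity) hlo
  rw [one_div, Real.inv_rpow hw.le, ← Real.rpow_neg hw.le, ← Real.mul_rpow hc.le hx.le,
    ← Real.mul_rpow (hc.le.trans (le_of_mul_le_mul_right (hlo.trans hup) hx)) hx.le]
  exact ⟨Real.rpow_le_rpow_of_nonpos hw hup (by linarith),
    Real.rpow_le_rpow_of_nonpos (by positivity) hlo (by linarith)⟩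

end Comparison

section Antitree

variable {X : Type*}

def antitreeWeight (ℓ : X → ℕ) (x y : X) : ℝ :=
  if ℓ x + 1 = ℓ y ∨ ℓ y + 1 = ℓ x then 1 else 0

/-- `∂_b B_k(o) = #S_k · #S_{k+1}` for the anti-tree with spheres `S_k = ℓ⁻¹(k)`. -/
def levelBoundary (ℓ : X → ℕ) (k : ℕ) : ℝ :=
  (Nat.card {x | ℓ x = k} : ℝ) * (Nat.card {x | ℓ x = k + 1} : ℝ)

lemma pEnergy_one_zero_sub (p : ℝ) (b : X → X → ℝ) (W φ : X → ℝ) :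
    pEnergy p b (fun _ => 1) (fun x => 0 - W x) φ =
      (1 / 2) * ∑' z : X × X, b z.1 z.2 * |φ z.1 - φ z.2| ^ p - ∑' x, W x * |φ x| ^ p := by
  simp [pEnergy, sub_eq_add_neg, tsum_neg]

variable {ℓ : X → ℕ}

lemma card_toFinset_level (hfin : ∀ r : ℕ, {x | ℓ x = r}.Finite) (r : ℕ) :
    #(hfin r).toFinset = Nat.card {x | ℓ x = r} := by
  rw [Nat.card_coe_set_eq, Set.ncard_eq_toFinset_card _ (hfin r)]

lemma levelBoundary_pos (hfin : ∀ r : ℕ, {x | ℓ x = r}.Finite)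
    (hne : ∀ r : ℕ, {x | ℓ x = r}.Nonempty) (k : ℕ) : 0 < levelBoundary ℓ k := by
  have hcard : ∀ r, (0 : ℝ) < Nat.card {x | ℓ x = r} := fun r => by
    rw [← card_toFinset_level hfin]
    exact_mod_cast ((hfin r).toFinset_nonempty.2 (hne r)).card_pos
  exact mul_pos (hcard k) (hcard (k + 1))

lemma antitree_energy_eq_sum_levels (hfin : ∀ r : ℕ, {x | ℓ x = r}.Finite) {p : ℝ} (hp : 0 < p)
    {φ : X → ℝ} {R : ℕ} (hφ : ∀ x, R ≤ ℓ x → φ x = 0) :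
    (1 / 2) * ∑' z : X × X, antitreeWeight ℓ z.1 z.2 * |φ z.1 - φ z.2| ^ p =
      ∑ k ∈ range R, ∑ x ∈ (hfin k).toFinset, ∑ y ∈ (hfin (k + 1)).toFinset, |φ x - φ y| ^ p := by
  set g : X × X → ℝ := fun z => if ℓ z.1 + 1 = ℓ z.2 then |φ z.1 - φ z.2| ^ p else 0
  set s := (range R).biUnion fun k => (hfin k).toFinset ×ˢ (hfin (k + 1)).toFinset
  have hs : ∀ z, z ∈ s ↔ ℓ z.1 < R ∧ ℓ z.1 + 1 = ℓ z.2 := fun z => by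
    simp only [s, mem_biUnion, mem_range, mem_product, Set.Finite.mem_toFinset,
      Set.mem_ofPred_eq]
    constructor
    · rintro ⟨k, hk, h1, h2⟩; omega
    · rintro ⟨h1, h2⟩; exact ⟨ℓ z.1, h1, rfl, h2.symm⟩
  have hg : ∀ z ∉ s, g z = 0 := fun z hz => by
    simp only [g, hs, not_and] at hz ⊢
    split_ifs with h
    · rw [hφ z.1 (by omega), hφ z.2 (by omega), sub_zero, abs_zero, Real.zero_rpow hp.ne']
    · rfl
  have hsplit : ∀ z : X × X, antitreeWeight ℓ z.1 z.2 * |φ z.1 - φ z.2| ^ p = g z + g z.swap :=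
    fun z => by
      simp only [antitreeWeight, g, Prod.fst_swap, Prod.snd_swap, abs_sub_comm (φ z.2)]
      split_ifs <;> first | omega | simp
  have hgs : Summable g := summable_of_ne_finset_zero hg
  have hdisj : (range R : Set ℕ).PairwiseDisjoint
      fun k => (hfin k).toFinset ×ˢ (hfin (k + 1)).toFinset := fun j _ k _ hjk => by
    simp only [Function.onFun, disjoint_left, mem_product, Set.Finite.mem_toFinset,
      Set.mem_ofPred_eq]
    rintro z ⟨rfl, -⟩ ⟨h, -⟩
    exact hjk h
  calc (1 / 2) * ∑' z : X × X, antitreeWeight ℓ z.1 z.2 * |φ z.1 - φ z.2| ^ p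
      = (1 / 2) * (∑' z, g z + ∑' z, g (Equiv.prodComm X X z)) := by
        simp only [hsplit]
        exact congrArg _ (hgs.tsum_add (hgs.comp_injective Prod.swap_injective))
    _ = ∑ z ∈ s, g z := by rw [Equiv.tsum_eq, tsum_eq_sum hg]; ring
    _ = _ := by
        rw [sum_biUnion hdisj]
        refine sum_congr rfl fun k _ => ?_
        rw [sum_product]
        refine sum_congr rfl fun x hx => sum_congr rfl fun y hy => ?_
        simp only [Set.Finite.mem_toFinset, Set.mem_ofPred_eq] at hx hy
        simp [g, hx, hy]

lemma sum_level_pair_comp (hfin : ∀ r : ℕ, {x | ℓ x = r}.Finite) {p : ℝ} (f : ℕ → ℝ)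
    (k : ℕ) :
    ∑ x ∈ (hfin k).toFinset, ∑ y ∈ (hfin (k + 1)).toFinset, |f (ℓ x) - f (ℓ y)| ^ p =
      levelBoundary ℓ k * |f k - f (k + 1)| ^ p := by
  have hlevel : ∀ r, ∀ x ∈ (hfin r).toFinset, ℓ x = r := fun r x hx => by simpa using hx
  rw [sum_congr rfl fun x hx => sum_congr rfl fun y hy => by rw [hlevel k x hx, hlevel _ y hy]]
  simp only [sum_const, nsmul_eq_mul, card_toFinset_level hfin, levelBoundary]
  ring

lemma levelBoundary_mul_rpow_abs_sub_expect_le (hfin : ∀ r : ℕ, {x | ℓ x = r}.Finite)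
    (hne : ∀ r : ℕ, {x | ℓ x = r}.Nonempty) {p : ℝ} (hp : 1 ≤ p) (φ : X → ℝ) (k : ℕ) :
    levelBoundary ℓ k *
        |(𝔼 x ∈ (hfin k).toFinset, φ x) - (𝔼 y ∈ (hfin (k + 1)).toFinset, φ y)| ^ p ≤
      ∑ x ∈ (hfin k).toFinset, ∑ y ∈ (hfin (k + 1)).toFinset, |φ x - φ y| ^ p := by
  set P := (hfin k).toFinset ×ˢ (hfin (k + 1)).toFinset
  have hw := levelBoundary_pos hfin hne k
  have hP : (#P : ℝ) = levelBoundary ℓ k := by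
    simp [P, card_product, card_toFinset_level hfin, levelBoundary]
  have hne' : ∀ r, (hfin r).toFinset.Nonempty := fun r => (hfin r).toFinset_nonempty.2 (hne r)
  have hdiff : (𝔼 x ∈ (hfin k).toFinset, φ x) - (𝔼 y ∈ (hfin (k + 1)).toFinset, φ y) =
      𝔼 z ∈ P, (φ z.1 - φ z.2) := by
    rw [expect_product]
    simp only [expect_sub_distrib, expect_const (hne' k), expect_const (hne' (k + 1))]
  have habs : |𝔼 z ∈ P, (φ z.1 - φ z.2)| ≤ (∑ z ∈ P, |φ z.1 - φ z.2|) / levelBoundary ℓ k := by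
    rw [← hP, ← expect_eq_sum_div_card]; exact abs_expect_le _ _
  calc levelBoundary ℓ k *
        |(𝔼 x ∈ (hfin k).toFinset, φ x) - (𝔼 y ∈ (hfin (k + 1)).toFinset, φ y)| ^ p
      ≤ levelBoundary ℓ k * ((∑ z ∈ P, |φ z.1 - φ z.2|) / levelBoundary ℓ k) ^ p := by
        rw [hdiff]; gcongr
    _ = levelBoundary ℓ k ^ (1 - p) * (∑ z ∈ P, |φ z.1 - φ z.2|) ^ p := by
        rw [Real.div_rpow (sum_nonneg fun _ _ => abs_nonneg _) hw.le, Real.rpow_sub hw,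
          Real.rpow_one]
        field_simp
    _ ≤ levelBoundary ℓ k ^ (1 - p) *
          (levelBoundary ℓ k ^ (p - 1) * ∑ z ∈ P, |φ z.1 - φ z.2| ^ p) := by
        rw [← hP]; gcongr; exact Real.rpow_sum_le_const_mul_sum_rpow P _ hp
    _ = ∑ x ∈ (hfin k).toFinset, ∑ y ∈ (hfin (k + 1)).toFinset, |φ x - φ y| ^ p := by
        rw [← mul_assoc, ← Real.rpow_add hw, sub_add_sub_cancel', sub_self, Real.rpow_zero,
          one_mul, sum_product]

lemma antitree_pSubcritical_of_summable (hfin : ∀ r : ℕ, {x | ℓ x = r}.Finite)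
    (hne : ∀ r : ℕ, {x | ℓ x = r}.Nonempty) {o : X} (h0 : {x | ℓ x = 0} = {o}) {p : ℝ}
    (hp : 1 < p) (hsum : Summable fun k => (1 / levelBoundary ℓ k) ^ (1 / (p - 1))) :
    pSubcritical p (antitreeWeight ℓ) (fun _ => 1) (fun _ => 0) := by
  set S := ∑' k, (1 / levelBoundary ℓ k) ^ (1 / (p - 1))
  have hr : ∀ k, 0 < (1 / levelBoundary ℓ k) ^ (1 / (p - 1)) := fun k => by
    have := levelBoundary_pos hfin hne k; positivity
  have hS : 0 < S := hsum.tsum_pos (fun k => (hr k).le) 0 (hr 0)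
  refine ⟨Pi.single o (S ^ (1 - p)), fun x => by rw [Pi.single_apply]; split_ifs <;> positivity,
    by simpa using (by positivity : S ^ (1 - p) ≠ 0), fun φ hφ => ?_⟩
  obtain ⟨R, hR⟩ : ∃ R, ∀ x, R ≤ ℓ x → φ x = 0 := ⟨hφ.toFinset.sup ℓ + 1, fun x hx => by
    by_contra h
    have := le_sup (f := ℓ) (hφ.mem_toFinset.2 h)
    omega⟩
  set a := fun k => 𝔼 x ∈ (hfin k).toFinset, φ x
  have ha0 : a 0 = φ o := by simp [a, h0]
  have haR : a R = 0 := expect_eq_zero fun x hx => hR x (by simp at hx; omega)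
  have hpot : ∑' x, (Pi.single o (S ^ (1 - p)) : X → ℝ) x * |φ x| ^ p =
      S ^ (1 - p) * |φ o| ^ p := by
    rw [tsum_eq_single o fun x hx => by simp [hx]]; simp
  rw [pEnergy_one_zero_sub, antitree_energy_eq_sum_levels hfin (by linarith) hR, hpot, sub_nonneg]
  calc S ^ (1 - p) * |φ o| ^ p
      ≤ S ^ (1 - p) *
          (S ^ (p - 1) * ∑ k ∈ range R, levelBoundary ℓ k * |a k - a (k + 1)| ^ p) := by
        rw [← ha0]
        gcongr
        exact halfLine_hardy hp (levelBoundary_pos hfin hne) hsum a haR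
    _ = ∑ k ∈ range R, levelBoundary ℓ k * |a k - a (k + 1)| ^ p := by
        rw [← mul_assoc, ← Real.rpow_add hS]; simp
    _ ≤ _ := sum_le_sum fun k _ =>
        levelBoundary_mul_rpow_abs_sub_expect_le hfin hne hp.le φ k

lemma summable_of_antitree_pSubcritical (hfin : ∀ r : ℕ, {x | ℓ x = r}.Finite)
    (hne : ∀ r : ℕ, {x | ℓ x = r}.Nonempty) {p : ℝ} (hp : 1 < p)
    (hsub : pSubcritical p (antitreeWeight ℓ) (fun _ => 1) (fun _ => 0)) :
    Summable fun k => (1 / levelBoundary ℓ k) ^ (1 / (p - 1)) := by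
  by_contra hdiv
  obtain ⟨W, hW, hWne, hQ⟩ := hsub
  obtain ⟨x₀, hx₀⟩ := Function.ne_iff.1 hWne
  have hWx₀ : 0 < W x₀ := (hW x₀).lt_of_ne' hx₀
  obtain ⟨M, f, hf₀, hfM, hE⟩ :=
    halfLine_exists_cutoff hp (levelBoundary_pos hfin hne) hdiv (ℓ x₀) (half_pos hWx₀)
  have hφ : (Function.support (f ∘ ℓ)).Finite :=
    ((range M).finite_toSet.biUnion fun k _ => hfin k).subset fun x hx => by
      simp only [Function.mem_support, Function.comp_apply] at hx
      exact Set.mem_biUnion (mem_range.2 (by by_contra h; exact hx (hfM _ (by omega)))) rfl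
  have hpot : W x₀ ≤ ∑' x, W x * |f (ℓ x)| ^ p := by
    have hsum : Summable fun x => W x * |f (ℓ x)| ^ p := summable_of_ne_finset_zero
      (s := hφ.toFinset) fun x hx => by simp_all [Real.zero_rpow (by linarith : p ≠ 0)]
    simpa [hf₀] using hsum.le_tsum x₀ fun x _ => mul_nonneg (hW x) (by positivity)
  have := hQ (f ∘ ℓ) hφ
  rw [pEnergy_one_zero_sub, antitree_energy_eq_sum_levels hfin (φ := f ∘ ℓ) (by linarith)
    (R := M) fun x hx => hfM _ hx] at this
  simp only [Function.comp_apply, sum_level_pair_comp hfin] at this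
  linarith

end Antitree

section SphereSizes

variable {X : Type*} {ℓ : X → ℕ} {γ : ℝ}

lemma level_nonempty {o : X} (h0 : {x | ℓ x = 0} = {o}) (h1 : Nat.card {x | ℓ x = 1} = 1)
    (hcard : ∀ r : ℕ, 1 ≤ r → Nat.card {x | ℓ x = r + 1} = ⌈(r : ℝ) ^ γ⌉₊) :
    ∀ r : ℕ, {x | ℓ x = r}.Nonempty
  | 0 => h0 ▸ Set.singleton_nonempty o
  | 1 => Set.nonempty_of_ncard_ne_zero (by rw [← Nat.card_coe_set_eq, h1]; exact one_ne_zero)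
  | s + 2 => Set.nonempty_of_ncard_ne_zero <| by
      rw [← Nat.card_coe_set_eq, hcard (s + 1) (by omega)]
      exact (Nat.ceil_pos.2 (by positivity)).ne'

lemma levelBoundary_bounds (hγ : 0 ≤ γ) (h1 : Nat.card {x | ℓ x = 1} = 1)
    (hcard : ∀ r : ℕ, 1 ≤ r → Nat.card {x | ℓ x = r + 1} = ⌈(r : ℝ) ^ γ⌉₊) {r : ℕ}
    (hr : 1 ≤ r) :
    2 ^ (-γ) * (r : ℝ) ^ (2 * γ) ≤ levelBoundary ℓ r ∧
      levelBoundary ℓ r ≤ 4 * (r : ℝ) ^ (2 * γ) := by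
  have hnext : ∀ s : ℕ, 1 ≤ s → (s : ℝ) ^ γ ≤ Nat.card {x | ℓ x = s + 1} ∧
      (Nat.card {x | ℓ x = s + 1} : ℝ) ≤ 2 * (s : ℝ) ^ γ := fun s hs => by
    have : (1 : ℝ) ≤ (s : ℝ) ^ γ := Real.one_le_rpow (by exact_mod_cast hs) hγ
    rw [hcard s hs]
    exact ⟨Nat.le_ceil _, Nat.ceil_le_two_mul (by linarith)⟩
  have hcur : 2 ^ (-γ) * (r : ℝ) ^ γ ≤ Nat.card {x | ℓ x = r} ∧
      (Nat.card {x | ℓ x = r} : ℝ) ≤ 2 * (r : ℝ) ^ γ := by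
    obtain rfl | hr2 := eq_or_lt_of_le hr
    · simp [h1, Real.rpow_le_one_of_one_le_of_nonpos one_le_two (neg_nonpos.2 hγ)]
    · obtain ⟨s, rfl⟩ : ∃ s, r = s + 1 := ⟨r - 1, by omega⟩
      obtain ⟨hlo, hup⟩ := hnext s (by omega)
      have hs' : (1 : ℝ) ≤ s := by exact_mod_cast (by omega : 1 ≤ s)
      push_cast
      constructor
      · calc 2 ^ (-γ) * ((s : ℝ) + 1) ^ γ = (((s : ℝ) + 1) / 2) ^ γ := by
              rw [Real.div_rpow (by positivity) zero_le_two, Real.rpow_neg zero_le_two]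
              ring
          _ ≤ (s : ℝ) ^ γ := by gcongr; linarith
          _ ≤ _ := hlo
      · exact hup.trans (by gcongr; linarith)
  obtain ⟨hlo, hup⟩ := hnext r hr
  have hpow : (r : ℝ) ^ (2 * γ) = (r : ℝ) ^ γ * (r : ℝ) ^ γ := by
    rw [two_mul, Real.rpow_add (by exact_mod_cast hr)]
  rw [levelBoundary, hpow]
  constructor
  · calc 2 ^ (-γ) * ((r : ℝ) ^ γ * (r : ℝ) ^ γ) = 2 ^ (-γ) * (r : ℝ) ^ γ * (r : ℝ) ^ γ := by
          ring
      _ ≤ _ := mul_le_mul hcur.1 hlo (by positivity) (by positivity)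
  · calc _ ≤ 2 * (r : ℝ) ^ γ * (2 * (r : ℝ) ^ γ) :=
          mul_le_mul hcur.2 hup (by positivity) (by positivity)
      _ = _ := by ring

lemma one_div_levelBoundary_rpow_bounds {p : ℝ} (hp : 1 < p) (hγ : 0 ≤ γ)
    (h1 : Nat.card {x | ℓ x = 1} = 1)
    (hcard : ∀ r : ℕ, 1 ≤ r → Nat.card {x | ℓ x = r + 1} = ⌈(r : ℝ) ^ γ⌉₊) {k : ℕ}
    (hk : 1 ≤ k) :
    4 ^ (-(1 / (p - 1))) * (k : ℝ) ^ (-(2 * γ / (p - 1))) ≤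
        (1 / levelBoundary ℓ k) ^ (1 / (p - 1)) ∧
      (1 / levelBoundary ℓ k) ^ (1 / (p - 1)) ≤
        (2 ^ (-γ)) ^ (-(1 / (p - 1))) * (k : ℝ) ^ (-(2 * γ / (p - 1))) := by
  obtain ⟨hlo, hup⟩ := levelBoundary_bounds hγ h1 hcard hk
  have hpow : ((k : ℝ) ^ (2 * γ)) ^ (-(1 / (p - 1))) = (k : ℝ) ^ (-(2 * γ / (p - 1))) := by
    rw [← Real.rpow_mul (Nat.cast_nonneg k)]; congr 1; ring
  rw [← hpow]
  have : (0 : ℝ) < k := by exact_mod_cast hk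
  exact one_div_rpow_bounds (by positivity) (by positivity) (by simp; linarith) hlo hup

end SphereSizes

theorem antitree_asymptotics_general
    {X : Type}
    (p γ : ℝ) (hp : 1 < p) (hγ : 0 < γ)
    (ℓ : X → ℕ) (o : X)
    (hfin : ∀ r : ℕ, {x | ℓ x = r}.Finite)
    (h0 : {x | ℓ x = 0} = {o})
    (h1 : Nat.card {x | ℓ x = 1} = 1)
    (hcard : ∀ r : ℕ, 1 ≤ r → Nat.card {x | ℓ x = r + 1} = ⌈(r : ℝ) ^ γ⌉₊)
    (b : X → X → ℝ)
    (hbdef : ∀ x y, b x y = if ℓ x + 1 = ℓ y ∨ ℓ y + 1 = ℓ x then 1 else 0) :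
    (∃ c C : ℝ, 0 < c ∧ 0 < C ∧ ∀ r : ℕ, 1 ≤ r →
      c * (r : ℝ) ^ (2 * γ)
          ≤ (Nat.card {x | ℓ x = r} : ℝ) * (Nat.card {x | ℓ x = r + 1} : ℝ) ∧
        (Nat.card {x | ℓ x = r} : ℝ) * (Nat.card {x | ℓ x = r + 1} : ℝ)
          ≤ C * (r : ℝ) ^ (2 * γ)) ∧
    (pSubcritical p b (fun _ => 1) (fun _ => 0) ↔ (p - 1) / 2 < γ) ∧
    ((p - 1) / 2 < γ →
      ∃ c C : ℝ, 0 < c ∧ 0 < C ∧ ∀ z : X, z ≠ o →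
        c * (ℓ z : ℝ) ^ (-(2 * γ - p + 1) / (p - 1))
            ≤ (∑' k : ℕ, ((1 : ℝ) / ((Nat.card {x | ℓ x = ℓ z + k} : ℝ)
                * (Nat.card {x | ℓ x = ℓ z + k + 1} : ℝ))) ^ (1 / (p - 1))) ∧
          (∑' k : ℕ, ((1 : ℝ) / ((Nat.card {x | ℓ x = ℓ z + k} : ℝ)
                * (Nat.card {x | ℓ x = ℓ z + k + 1} : ℝ))) ^ (1 / (p - 1)))
            ≤ C * (ℓ z : ℝ) ^ (-(2 * γ - p + 1) / (p - 1))) := by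
  obtain rfl : b = antitreeWeight ℓ := funext fun x => funext (hbdef x)
  have hne := level_nonempty h0 h1 hcard
  have hres := fun k (hk : 1 ≤ k) => one_div_levelBoundary_rpow_bounds hp hγ.le h1 hcard hk
  set β := 2 * γ / (p - 1)
  have hβ : 1 < β ↔ (p - 1) / 2 < γ := by
    rw [one_lt_div (sub_pos.2 hp)]; constructor <;> intro <;> linarith
  refine ⟨⟨_, _, by positivity, by norm_num, fun r hr => levelBoundary_bounds hγ.le h1 hcard hr⟩,
    ?_, fun hγ' => ?_⟩
  · rw [← hβ, ← summable_iff_of_rpow_bounds (by positivity) hres]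
    exact ⟨summable_of_antitree_pSubcritical hfin hne hp,
      antitree_pSubcritical_of_summable hfin hne h0 hp⟩
  · have hβ1 := hβ.2 hγ'
    have hexp : -(2 * γ - p + 1) / (p - 1) = 1 - β := by
      simp only [β]; field_simp [(sub_pos.2 hp).ne']; ring
    refine ⟨_, _, by positivity, mul_pos (by positivity) (div_pos (by linarith) (by linarith)),
      fun z hz => hexp ▸ tsum_nat_add_bounds_of_rpow_bounds (by positivity) hβ1 hres ?_⟩
    refine Nat.pos_of_ne_zero fun h => hz ?_
    have hz0 : z ∈ {x | ℓ x = 0} := h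
    rwa [h0] at hz0

/-- asymptotics on anti-trees. -/
theorem antitree_asymptotics
    {X : Type} [Countable X] [Infinite X]
    (p γ : ℝ) (hp : 1 < p) (hγ : 0 < γ)
    (ℓ : X → ℕ) (o : X)
    (hfin : ∀ r : ℕ, {x | ℓ x = r}.Finite)
    (h0 : {x | ℓ x = 0} = {o})
    (h1 : Nat.card {x | ℓ x = 1} = 1)
    (hcard : ∀ r : ℕ, 1 ≤ r → Nat.card {x | ℓ x = r + 1} = ⌈(r : ℝ) ^ γ⌉₊)
    (b : X → X → ℝ)
    (hbdef : ∀ x y, b x y = if ℓ x + 1 = ℓ y ∨ ℓ y + 1 = ℓ x then 1 else 0) :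
    (∃ c C : ℝ, 0 < c ∧ 0 < C ∧ ∀ r : ℕ, 1 ≤ r →
      c * (r : ℝ) ^ (2 * γ)
          ≤ (Nat.card {x | ℓ x = r} : ℝ) * (Nat.card {x | ℓ x = r + 1} : ℝ) ∧
        (Nat.card {x | ℓ x = r} : ℝ) * (Nat.card {x | ℓ x = r + 1} : ℝ)
          ≤ C * (r : ℝ) ^ (2 * γ)) ∧
    (pSubcritical p b (fun _ => 1) (fun _ => 0) ↔ (p - 1) / 2 < γ) ∧
    ((p - 1) / 2 < γ →
      ∃ c C : ℝ, 0 < c ∧ 0 < C ∧ ∀ z : X, z ≠ o →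
        c * (ℓ z : ℝ) ^ (-(2 * γ - p + 1) / (p - 1))
            ≤ (∑' k : ℕ, ((1 : ℝ) / ((Nat.card {x | ℓ x = ℓ z + k} : ℝ)
                * (Nat.card {x | ℓ x = ℓ z + k + 1} : ℝ))) ^ (1 / (p - 1))) ∧
          (∑' k : ℕ, ((1 : ℝ) / ((Nat.card {x | ℓ x = ℓ z + k} : ℝ)
                * (Nat.card {x | ℓ x = ℓ z + k + 1} : ℝ))) ^ (1 / (p - 1)))
            ≤ C * (ℓ z : ℝ) ^ (-(2 * γ - p + 1) / (p - 1))) :=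
  antitree_asymptotics_general p γ hp hγ ℓ o hfin h0 h1 hcard b hbdef
end
end

section
/- Let d ≥ 2 be an integer, p > 1, and let 𝕋_d be the d-regular tree with standard weights and m ≡ 1, rooted at o. Suppose β ∈ (0,1) satisfies (1-β)^{p-1} = (1/d)·( (1/β − 1)^{p-1} − 1 ), and define u(x) := β^{|x|}. Then (Δ_p + 1)[u](x) = 0 for every x ∈ X ∖ {o}, and u is a positive solution of (Δ_p + 1)[u] = 0 of minimal growth at infinity: whenever v > 0 satisfies (Δ_p + 1)[v] ≥ 0 on X∖K for some finite K ∋ o and u ≤ v on K, then u ≤ v on X∖K. -/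
open Real Filter

noncomputable section

attribute [local instance] Classical.propDecidable

lemma spow_of_pos {r a : ℝ} (ha : 0 < a) : spow r a = a ^ r := by
  rw [spow, if_neg ha.ne', abs_of_pos ha, ← Real.rpow_add_one ha.ne', sub_add_cancel]

lemma spow_of_neg {r a : ℝ} (ha : a < 0) : spow r a = -((-a) ^ r) := by
  have h : (0:ℝ) < -a := by linarith
  rw [spow, if_neg ha.ne, abs_of_neg ha,
    show (-a) ^ (r-1) * a = -((-a) ^ (r-1) * (-a)) by ring,
    ← Real.rpow_add_one h.ne', sub_add_cancel]

/-- `u(x) = β^{|x|}` is `(Δ_p+1)`-harmonic off the root and has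
minimal growth at infinity on the `d`-regular tree. -/
theorem regular_tree_beta_solution
    {X : Type} [Countable X] [Infinite X]
    (p : ℝ) (hp : 1 < p) (d : ℕ) (hd : 2 ≤ d)
    (b : X → X → ℝ) (o : X) (ℓ : X → ℕ) (htree : IsRegularTree d b o ℓ)
    (β : ℝ) (hβ0 : 0 < β) (hβ1 : β < 1)
    (hβeq : (1 - β) ^ (p - 1) = (1 / (d : ℝ)) * ((1 / β - 1) ^ (p - 1) - 1)) :
    (∀ x, x ≠ o →
      schrodOp p b (fun _ => 1) (fun _ => 1) (fun y => β ^ ℓ y) x = 0) ∧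
    ∀ K : Set X, K.Finite → o ∈ K →
      ∀ v : X → ℝ, (∀ x, 0 < v x) →
        (∀ x ∉ K, 0 ≤ schrodOp p b (fun _ => 1) (fun _ => 1) v x) →
        (∀ x ∈ K, β ^ ℓ x ≤ v x) →
        ∀ x ∉ K, β ^ ℓ x ≤ v x := by
  obtain ⟨hsym, hdiag, h01, hlo, hfwd, hbwd, hstep⟩ := htree
  have hr : 0 < p - 1 := by linarith
  have hβn : ∀ n : ℕ, (0:ℝ) < β ^ n := fun n => pow_pos hβ0 n
  -- only the root has level 0
  have hlz : ∀ z, ℓ z = 0 → z = o := by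
    intro z hz
    by_contra hzo
    have h1 := hbwd z hzo
    have h2 : {y | b z y = 1 ∧ ℓ y + 1 = ℓ z} = ∅ := by
      ext y; simp [hz]
    rw [h2] at h1; simp at h1
  -- finiteness of forward/backward neighbor sets
  have hfwdfin : ∀ x, {y | b x y = 1 ∧ ℓ y = ℓ x + 1}.Finite := fun x =>
    Set.finite_of_ncard_ne_zero (by rw [hfwd x]; omega)
  have hbwdfin : ∀ x, {y | b x y = 1 ∧ ℓ y + 1 = ℓ x}.Finite := by
    intro x
    by_cases hx : x = o
    · subst hx
      have h2 : {y | b x y = 1 ∧ ℓ y + 1 = ℓ x} = ∅ := by ext y; simp [hlo]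
      rw [h2]; exact Set.finite_empty
    · exact Set.finite_of_ncard_ne_zero (by rw [hbwd x hx]; omega)
  have hnbrfin : ∀ x, {y | b x y = 1}.Finite := by
    intro x
    refine ((hfwdfin x).union (hbwdfin x)).subset ?_
    intro y hy
    rcases hstep x y hy with h | h
    · exact Or.inl ⟨hy, h⟩
    · exact Or.inr ⟨hy, h.symm⟩
  have hb0 : ∀ x y, y ∉ {y | b x y = 1} → b x y = 0 := fun x y hy =>
    (h01 x y).resolve_right hy
  -- pLap as a finite sum
  have hpl : ∀ (f : X → ℝ) (x : X), pLap p b (fun _ => 1) f x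
      = ∑ y ∈ (hnbrfin x).toFinset, spow (p-1) (f x - f y) := by
    intro f x
    rw [pLap, tsum_eq_sum (s := (hnbrfin x).toFinset) (fun y hy => by
        rw [hb0 x y (by simpa using hy), zero_mul])]
    rw [show (1:ℝ)/1 = 1 by norm_num, one_mul]
    refine Finset.sum_congr rfl (fun y hy => ?_)
    have hby : b x y = 1 := by simpa using hy
    rw [hby, one_mul]
  -- the key algebraic identity
  have hkey : (d:ℝ) * β ^ (p-1) * (1 - β) ^ (p-1) = (1-β) ^ (p-1) - β ^ (p-1) := by
    have h1 : (1:ℝ)/β - 1 = (1-β)/β := by field_simp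
    rw [h1, Real.div_rpow (by linarith) hβ0.le] at hβeq
    have hd0 : (0:ℝ) < d := by exact_mod_cast (by omega : 0 < d)
    have hβp : (0:ℝ) < β ^ (p-1) := Real.rpow_pos_of_pos hβ0 _
    field_simp at hβeq
    nlinarith [hβeq, hβp, hd0]
  -- harmonicity off the root
  have hharm : ∀ x, x ≠ o →
      schrodOp p b (fun _ => 1) (fun _ => 1) (fun y => β ^ ℓ y) x = 0 := by
    intro x hx
    obtain ⟨n, hn⟩ : ∃ n, ℓ x = n + 1 := by
      have h2 : ℓ x ≠ 0 := fun h => hx (hlz x h)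
      exact ⟨ℓ x - 1, by omega⟩
    have hdisj : Disjoint (hfwdfin x).toFinset (hbwdfin x).toFinset := by
      rw [Finset.disjoint_left]
      intro y hy1 hy2
      simp only [Set.Finite.mem_toFinset, Set.mem_setOf_eq] at hy1 hy2
      omega
    have hsplit : (hnbrfin x).toFinset = (hfwdfin x).toFinset ∪ (hbwdfin x).toFinset := by
      ext y
      simp only [Set.Finite.mem_toFinset, Finset.mem_union, Set.mem_setOf_eq]
      constructor
      · intro hy
        rcases hstep x y hy with h | h
        · exact Or.inl ⟨hy, h⟩
        · exact Or.inr ⟨hy, h.symm⟩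
      · rintro (⟨h, _⟩ | ⟨h, _⟩) <;> exact h
    rw [schrodOp, hpl, hsplit, Finset.sum_union hdisj]
    have hA : ∀ y ∈ (hfwdfin x).toFinset,
        spow (p-1) ((fun y => β ^ ℓ y) x - (fun y => β ^ ℓ y) y)
          = (β ^ ℓ x) ^ (p-1) * (1-β) ^ (p-1) := by
      intro y hy
      have hy' : ℓ y = ℓ x + 1 := ((hfwdfin x).mem_toFinset.mp hy).2
      simp only
      rw [hy', pow_succ, show β ^ ℓ x - β ^ ℓ x * β = β ^ ℓ x * (1 - β) by ring,
        spow_of_pos (mul_pos (hβn _) (by linarith)),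
        Real.mul_rpow (hβn _).le (by linarith)]
    have hB : ∀ y ∈ (hbwdfin x).toFinset,
        spow (p-1) ((fun y => β ^ ℓ y) x - (fun y => β ^ ℓ y) y)
          = -((β ^ n) ^ (p-1) * (1-β) ^ (p-1)) := by
      intro y hy
      have hy' : ℓ y + 1 = ℓ x := ((hbwdfin x).mem_toFinset.mp hy).2
      have hyn : ℓ y = n := by omega
      simp only
      rw [hyn, hn, pow_succ,
        show β ^ n * β - β ^ n = -(β ^ n * (1 - β)) by ring,
        spow_of_neg (by nlinarith [hβn n]), neg_neg,
        Real.mul_rpow (hβn _).le (by linarith)]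
    rw [Finset.sum_congr rfl hA, Finset.sum_congr rfl hB,
      Finset.sum_const, Finset.sum_const,
      show (hfwdfin x).toFinset.card = d by
        rw [← Set.ncard_eq_toFinset_card _ (hfwdfin x)]; exact hfwd x,
      show (hbwdfin x).toFinset.card = 1 by
        rw [← Set.ncard_eq_toFinset_card _ (hbwdfin x)]; exact hbwd x hx]
    have hux : spow (p-1) ((fun y => β ^ ℓ y) x) = (β ^ ℓ x) ^ (p-1) :=
      spow_of_pos (hβn _)
    rw [hux]
    have hxs : (β ^ ℓ x) ^ (p-1) = (β ^ n) ^ (p-1) * β ^ (p-1) := by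
      rw [hn, pow_succ, Real.mul_rpow (hβn _).le hβ0.le]
    rw [hxs]
    simp only [nsmul_eq_mul, Nat.cast_one, one_mul]
    nlinarith [hkey, Real.rpow_pos_of_pos (hβn n) (p-1)]
  refine ⟨hharm, ?_⟩
  -- finiteness of levels and balls
  have hlevfin : ∀ k, {y | ℓ y = k}.Finite := by
    intro k
    induction k with
    | zero =>
      exact (Set.finite_singleton o).subset (fun y hy => by
        simp only [Set.mem_singleton_iff]; exact hlz y hy)
    | succ k ih =>
      refine (ih.biUnion (fun z _ => hfwdfin z)).subset ?_
      intro y hy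
      have hy' : ℓ y = k + 1 := hy
      have hyo : y ≠ o := fun h => by rw [h, hlo] at hy'; omega
      obtain ⟨z, hz⟩ := Set.ncard_eq_one.mp (hbwd y hyo)
      have hz' : b y z = 1 ∧ ℓ z + 1 = ℓ y := by
        have hm : z ∈ ({z} : Set X) := rfl
        rw [← hz] at hm
        exact hm
      have hzk : ℓ z = k := by omega
      simp only [Set.mem_iUnion, Set.mem_setOf_eq]
      exact ⟨z, hzk, by rw [hsym]; exact hz'.1, by omega⟩
  have hballfin : ∀ N, {y | ℓ y ≤ N}.Finite := by
    intro N
    refine (Set.Finite.biUnion (Finset.range (N+1)).finite_toSet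
      (fun k _ => hlevfin k)).subset ?_
    intro y hy
    have hy2 : ℓ y ≤ N := hy
    simp only [Finset.coe_range, Set.mem_iUnion, Set.mem_Iio, Set.mem_setOf_eq]
    exact ⟨ℓ y, by omega, rfl⟩
  -- minimal growth
  intro K hK hoK v hv hsup hle x hx
  refine le_of_forall_pos_le_add (fun ε hε => ?_)
  obtain ⟨N, hN⟩ := exists_pow_lt_of_lt_one hε hβ1
  set w : X → ℝ := fun y => v y + ε with hw
  suffices hmain : ∀ y, β ^ ℓ y ≤ w y from hmain x
  have hoT : o ∈ (hballfin N).toFinset := by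
    simp [Set.Finite.mem_toFinset, hlo]
  obtain ⟨x₀, hx₀T, hx₀max⟩ := Finset.exists_max_image (hballfin N).toFinset
    (fun y => β ^ ℓ y - w y) ⟨o, hoT⟩
  have hx₀N : ℓ x₀ ≤ N := by simpa using hx₀T
  rcases le_or_gt (β ^ ℓ x₀ - w x₀) 0 with hδ | hδ
  · intro y
    rcases le_or_gt (ℓ y) N with h | h
    · have h2 := hx₀max y (by simpa using h)
      linarith
    · have h1 : β ^ ℓ y ≤ β ^ N := pow_le_pow_of_le_one hβ0.le hβ1.le h.le
      have h2 := hv y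
      simp only [hw]
      linarith
  · exfalso
    have hwx₀ : ε < w x₀ := by
      have := hv x₀
      simp only [hw]
      linarith
    have hx₀K : x₀ ∉ K := by
      intro hmem
      have h2 := hle x₀ hmem
      simp only [hw] at hδ
      linarith
    have hlx₀ : ℓ x₀ + 1 ≤ N := by
      by_contra h
      have h2 : ℓ x₀ = N := by omega
      have h3 : β ^ ℓ x₀ < ε := by rw [h2]; exact hN
      linarith
    have hx₀o : x₀ ≠ o := fun h => hx₀K (h ▸ hoK)
    have hngh : ∀ y ∈ (hnbrfin x₀).toFinset,
        spow (p-1) (v x₀ - v y) ≤ spow (p-1) (β ^ ℓ x₀ - β ^ ℓ y) := by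
      intro y hy
      have hby : b x₀ y = 1 := by simpa using hy
      have hyl : ℓ y ≤ ℓ x₀ + 1 := by rcases hstep x₀ y hby with h | h <;> omega
      have hyT : y ∈ (hballfin N).toFinset := by
        simp only [Set.Finite.mem_toFinset, Set.mem_setOf_eq]
        omega
      have h2 := hx₀max y hyT
      apply spow_mono hr
      simp only [hw] at h2
      linarith
    have h1 : pLap p b (fun _ => 1) v x₀
        ≤ pLap p b (fun _ => 1) (fun y => β ^ ℓ y) x₀ := by
      rw [hpl, hpl]
      exact Finset.sum_le_sum hngh
    have h2 : spow (p-1) (v x₀) < spow (p-1) ((fun y => β ^ ℓ y) x₀) := by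
      simp only
      rw [spow_of_pos (hv x₀), spow_of_pos (hβn _)]
      refine Real.rpow_lt_rpow (hv x₀).le ?_ hr
      simp only [hw] at hδ
      linarith
    have h3 := hsup x₀ hx₀K
    have h4 := hharm x₀ hx₀o
    rw [schrodOp] at h3 h4
    simp only [one_mul] at h3 h4
    linarith
end
end

section
/- Landis theorem on p-recurrent graphs: Let 1 < p ≤ 2 and let b be a connected recurrent graph over (X,m), i.e., every positive Δ_p-superharmonic function on X is constant. Let H = Δ_p + V be a positive quasilinear Schrödinger operator such that V(x) ≤ 0 for all x outside some finite set. If u ∈ F_b(X) is H-harmonic, bounded, and liminf_{x→∞} u(x) = 0, then u ≡ 0. -/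
open Real Filter

noncomputable section

attribute [local instance] Classical.propDecidable

namespace LandisAux

lemma spow_zero' (r : ℝ) : spow r 0 = 0 := by simp [spow]

lemma spow_of_pos {r a : ℝ} (ha : 0 < a) : spow r a = a ^ r := by
  have h : a ^ ((r-1)+1) = a ^ (r-1) * a := Real.rpow_add_one ha.ne' (r-1)
  have h2 : (r-1)+1 = r := by ring
  rw [h2] at h
  rw [spow, if_neg ha.ne', abs_of_pos ha, h]

lemma spow_of_neg {r a : ℝ} (ha : a < 0) : spow r a = -((-a) ^ r) := by
  have hne : (-a) ≠ 0 := by intro h; apply ha.ne; linarith [neg_eq_zero.mp h]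
  have h : (-a) ^ ((r-1)+1) = (-a) ^ (r-1) * (-a) := Real.rpow_add_one hne (r-1)
  have h2 : (r-1)+1 = r := by ring
  rw [h2] at h
  rw [spow, if_neg ha.ne, abs_of_neg ha, h]
  ring

lemma spow_nonneg' {r a : ℝ} (ha : 0 ≤ a) : 0 ≤ spow r a := by
  rcases ha.lt_or_eq with h|h
  · rw [spow_of_pos h]; exact (Real.rpow_pos_of_pos h r).le
  · rw [← h, spow_zero']

lemma spow_pos' {r a : ℝ} (ha : 0 < a) : 0 < spow r a := by
  rw [spow_of_pos ha]; exact Real.rpow_pos_of_pos ha r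

lemma spow_neg' (r a : ℝ) : spow r (-a) = -spow r a := by
  rcases lt_trichotomy a 0 with h|h|h
  · rw [spow_of_neg h, spow_of_pos (by linarith : 0 < -a)]; ring
  · rw [h]; simp [spow_zero']
  · rw [spow_of_pos h, spow_of_neg (by linarith : -a < 0)]; simp

lemma spow_strictMono {r : ℝ} (hr : 0 < r) : StrictMono (spow r) := by
  intro a b hab
  rcases lt_trichotomy a 0 with ha|ha|ha
  · rcases lt_trichotomy b 0 with hb|hb|hb
    · rw [spow_of_neg ha, spow_of_neg hb]
      have : (-b) ^ r < (-a) ^ r := Real.rpow_lt_rpow (by linarith) (by linarith) hr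
      linarith
    · rw [hb, spow_zero', spow_of_neg ha]
      have := Real.rpow_pos_of_pos (by linarith : (0:ℝ) < -a) r
      linarith
    · rw [spow_of_neg ha, spow_of_pos hb]
      have h1 := Real.rpow_pos_of_pos (by linarith : (0:ℝ) < -a) r
      have h2 := Real.rpow_pos_of_pos hb r
      linarith
  · subst ha
    rw [spow_zero', spow_of_pos hab]
    exact Real.rpow_pos_of_pos hab r
  · rw [spow_of_pos ha, spow_of_pos (ha.trans hab)]
    exact Real.rpow_lt_rpow ha.le hab hr

lemma spow_const_mul {r c : ℝ} (hr : 0 < r) (hc : 0 < c) (a : ℝ) :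
    spow r (c * a) = c ^ r * spow r a := by
  rcases lt_trichotomy a 0 with ha|ha|ha
  · have hca : c * a < 0 := mul_neg_of_pos_of_neg hc ha
    rw [spow_of_neg ha, spow_of_neg hca, show -(c*a) = c * (-a) by ring,
      Real.mul_rpow hc.le (by linarith)]
    ring
  · rw [ha, mul_zero, spow_zero']; ring
  · have hca : 0 < c * a := mul_pos hc ha
    rw [spow_of_pos ha, spow_of_pos hca, Real.mul_rpow hc.le ha.le]

lemma abs_spow {r : ℝ} (hr : 0 < r) (a : ℝ) : |spow r a| = |a| ^ r := by
  rcases lt_trichotomy a 0 with ha|ha|ha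
  · rw [spow_of_neg ha, abs_of_neg ha, abs_neg,
      abs_of_nonneg (Real.rpow_pos_of_pos (by linarith : (0:ℝ) < -a) r).le]
  · rw [ha, spow_zero']; simp [Real.zero_rpow hr.ne']
  · rw [spow_of_pos ha, abs_of_pos ha, abs_of_nonneg (Real.rpow_pos_of_pos ha r).le]

lemma abs_min_sub_min_le (a b t : ℝ) : |min a t - min b t| ≤ |a - b| := by
  have h := abs_max_sub_max_le_abs (-a) (-b) (-t)
  rw [max_neg_neg, max_neg_neg] at h
  have h2 : |-min a t - -min b t| = |min a t - min b t| := by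
    rw [show -min a t - -min b t = -(min a t - min b t) by ring, abs_neg]
  have h3 : |-a - -b| = |a - b| := by
    rw [show -a - -b = -(a - b) by ring, abs_neg]
  rw [h2, h3] at h
  exact h

lemma summable_bspow {X : Type} {r : ℝ} (hr : 0 < r) (β g h : X → ℝ)
    (hβ : ∀ y, 0 ≤ β y) (hgh : ∀ y, |g y| ≤ |h y|)
    (hsum : Summable fun y => β y * |h y| ^ r) :
    Summable fun y => β y * spow r (g y) := by
  rw [← summable_abs_iff]
  have habs : (fun y => |β y * spow r (g y)|) = fun y => β y * |g y| ^ r := by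
    funext y; rw [abs_mul, abs_of_nonneg (hβ y), abs_spow hr]
  rw [habs]
  exact Summable.of_nonneg_of_le
    (fun y => mul_nonneg (hβ y) (Real.rpow_nonneg (abs_nonneg _) r))
    (fun y => mul_le_mul_of_nonneg_left (Real.rpow_le_rpow (abs_nonneg _) (hgh y) hr.le) (hβ y))
    hsum

/-- From `0 ≤ H[f](x)`: lower bound for the sum. -/
lemma sum_ge_of_super {X : Type} (p : ℝ) (b : X → X → ℝ) (m V : X → ℝ) (f : X → ℝ) (x : X)
    (hmx : 0 < m x) (h : 0 ≤ schrodOp p b m V f x) :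
    -(m x * (V x * spow (p-1) (f x))) ≤ ∑' y, b x y * spow (p - 1) (f x - f y) := by
  unfold schrodOp pLap at h
  set S := ∑' y, b x y * spow (p - 1) (f x - f y) with hS
  have h1 : -(V x * spow (p-1) (f x)) ≤ (1/m x) * S := by linarith
  have h2 := mul_le_mul_of_nonneg_left h1 hmx.le
  have h3 : m x * ((1/m x) * S) = S := by field_simp
  rw [h3] at h2
  linarith [h2]

/-- From `H[f](x) = 0`: exact value of the sum. -/
lemma sum_eq_of_harm {X : Type} (p : ℝ) (b : X → X → ℝ) (m V : X → ℝ) (f : X → ℝ) (x : X)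
    (hmx : 0 < m x) (h : schrodOp p b m V f x = 0) :
    (∑' y, b x y * spow (p - 1) (f x - f y)) = -(m x * (V x * spow (p-1) (f x))) := by
  unfold schrodOp pLap at h
  set S := ∑' y, b x y * spow (p - 1) (f x - f y) with hS
  have h1 : (1/m x) * S = -(V x * spow (p-1) (f x)) := by linarith
  have h3 : m x * ((1/m x) * S) = S := by field_simp
  calc S = m x * ((1/m x) * S) := h3.symm
    _ = m x * -(V x * spow (p-1) (f x)) := by rw [h1]
    _ = -(m x * (V x * spow (p-1) (f x))) := by ring

lemma aux_wpos {X : Type} (p : ℝ) (hq : 0 < p - 1)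
    (m : X → ℝ) (hm : ∀ x, 0 < m x)
    (b : X → X → ℝ) (hb : IsGraph b) (hconn : GraphConnected b) (V : X → ℝ)
    (w : X → ℝ) (hwF : inF p b w) (hw0 : ∀ x, 0 ≤ w x) (hwne : w ≠ 0)
    (hws : ∀ x, 0 ≤ schrodOp p b m V w x) : ∀ x, 0 < w x := by
  obtain ⟨hbnn, hbsymm, hbdiag, hbsum⟩ := hb
  have key : ∀ x, w x = 0 → ∀ y, 0 < b x y → w y = 0 := by
    intro x hx y hxy
    have hsum : Summable (fun y => b x y * spow (p-1) (w y)) := by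
      apply summable_bspow hq (fun y => b x y) w (fun y => w x - w y) (hbnn x)
        (fun y => by rw [hx]; simp [abs_sub_comm]) (hwF x)
    have h0 := hws x
    unfold schrodOp pLap at h0
    rw [hx, spow_zero', mul_zero, add_zero] at h0
    have hterm : ∀ y', b x y' * spow (p-1) (0 - w y') = -(b x y' * spow (p-1) (w y')) := by
      intro y'; rw [zero_sub, spow_neg']; ring
    rw [tsum_congr hterm, tsum_neg] at h0
    set S := ∑' y', b x y' * spow (p-1) (w y') with hSdef
    have hSnn : 0 ≤ S := tsum_nonneg (fun y' => mul_nonneg (hbnn x y') (spow_nonneg' (hw0 y')))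
    have hS0 : S = 0 := by
      by_contra hne
      have hpos : 0 < S := hSnn.lt_of_ne (Ne.symm hne)
      have hmm : 0 < (1 / m x) := one_div_pos.mpr (hm x)
      nlinarith
    have hy0 : b x y * spow (p-1) (w y) = 0 := by
      have hle := Summable.le_tsum hsum y (fun j _ => mul_nonneg (hbnn x j) (spow_nonneg' (hw0 j)))
      have hnn : 0 ≤ b x y * spow (p-1) (w y) :=
        mul_nonneg (hbnn x y) (spow_nonneg' (hw0 y))
      rw [← hSdef] at hle
      linarith
    have hsp : spow (p-1) (w y) = 0 := by
      rcases mul_eq_zero.mp hy0 with h|h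
      · exact absurd h hxy.ne'
      · exact h
    by_contra hne
    have hwy : 0 < w y := (hw0 y).lt_of_ne (Ne.symm hne)
    exact absurd hsp (ne_of_gt (spow_pos' hwy))
  obtain ⟨x₁, hx₁⟩ := Function.ne_iff.mp hwne
  intro x
  rcases (hw0 x).lt_or_eq with h|h
  · exact h
  exfalso
  have hall : ∀ z, Relation.ReflTransGen (fun a c => 0 < b a c) x z → w z = 0 := by
    intro z hz
    induction hz with
    | refl => exact h.symm
    | tail _ hyz ih => exact key _ ih _ hyz
  exact hx₁ (hall x₁ (hconn x x₁))

end LandisAux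

namespace LandisAux2
open LandisAux

lemma aux_wlb {X : Type} [Infinite X] (p : ℝ) (hq : 0 < p - 1)
    (m : X → ℝ) (hm : ∀ x, 0 < m x)
    (b : X → X → ℝ) (hb : IsGraph b) (V : X → ℝ)
    (hrec : ∀ w : X → ℝ, inF p b w → (∀ x, 0 ≤ w x) → w ≠ 0 →
      (∀ x, 0 ≤ pLap p b m w x) → ∃ c : ℝ, ∀ x, w x = c)
    (K : Set X) (hKfin : K.Finite) (hKV : ∀ x ∉ K, V x ≤ 0)
    (w : X → ℝ) (hwF : inF p b w) (hwpos : ∀ x, 0 < w x)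
    (hws : ∀ x, 0 ≤ schrodOp p b m V w x) :
    ∃ δ : ℝ, 0 < δ ∧ ∀ x, δ ≤ w x := by
  obtain ⟨hbnn, hbsymm, hbdiag, hbsum⟩ := hb
  have hw0 : ∀ x, 0 ≤ w x := fun x => (hwpos x).le
  have hwne : w ≠ 0 := by
    haveI : Nonempty X := Infinite.nonempty X
    exact Function.ne_iff.mpr ⟨Classical.arbitrary X, ne_of_gt (hwpos _)⟩
  by_cases hK : K.Nonempty
  · -- K nonempty
    set Kf := hKfin.toFinset with hKf
    have hKfne : Kf.Nonempty := by
      obtain ⟨x, hx⟩ := hK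
      exact ⟨x, hKfin.mem_toFinset.mpr hx⟩
    set t := Kf.inf' hKfne w with ht
    have ht_le : ∀ x ∈ K, t ≤ w x := fun x hx => Finset.inf'_le w (hKfin.mem_toFinset.mpr hx)
    obtain ⟨xt, hxtmem, hxt⟩ := Finset.exists_mem_eq_inf' hKfne w
    have htpos : 0 < t := by rw [ht, hxt]; exact hwpos xt
    set s := fun x => min (w x) t with hs
    have hdiff : ∀ x y, |s x - s y| ≤ |w x - w y| := fun x y => abs_min_sub_min_le _ _ _
    have hsF : inF p b s := by
      intro x
      apply Summable.of_nonneg_of_le _ _ (hwF x)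
      · intro y
        exact mul_nonneg (hbnn x y) (Real.rpow_nonneg (abs_nonneg _) _)
      · intro y
        exact mul_le_mul_of_nonneg_left
          (Real.rpow_le_rpow (abs_nonneg _) (hdiff x y) (by linarith)) (hbnn x y)
    have hs0 : ∀ x, 0 ≤ s x := fun x => le_min (hwpos x).le htpos.le
    have hspos : ∀ x, 0 < s x := fun x => lt_min (hwpos x) htpos
    have hsne : s ≠ 0 := Function.ne_iff.mpr ⟨xt, ne_of_gt (hspos xt)⟩
    have hsup : ∀ x, 0 ≤ pLap p b m s x := by
      intro x
      rcases le_or_gt t (w x) with hcase|hcase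
      · have hsx : s x = t := min_eq_right hcase
        unfold pLap
        apply mul_nonneg (one_div_nonneg.mpr (hm x).le)
        apply tsum_nonneg
        intro y
        apply mul_nonneg (hbnn x y)
        apply spow_nonneg'
        rw [hsx]
        have : s y ≤ t := min_le_right _ _
        linarith
      · have hxK : x ∉ K := fun hx => absurd (ht_le x hx) (not_le.mpr hcase)
        have hsx : s x = w x := min_eq_left hcase.le
        have hterm : ∀ y, b x y * spow (p-1) (w x - w y) ≤ b x y * spow (p-1) (s x - s y) := by
          intro y
          apply mul_le_mul_of_nonneg_left _ (hbnn x y)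
          apply (spow_strictMono hq).monotone
          have h1 : s y ≤ w y := min_le_left _ _
          rw [hsx]; linarith
        have hsum1 : Summable (fun y => b x y * spow (p-1) (w x - w y)) :=
          summable_bspow hq (fun y => b x y) (fun y => w x - w y) (fun y => w x - w y)
            (hbnn x) (fun y => le_refl _) (hwF x)
        have hsum2 : Summable (fun y => b x y * spow (p-1) (s x - s y)) :=
          summable_bspow hq (fun y => b x y) (fun y => s x - s y) (fun y => w x - w y)
            (hbnn x) (fun y => hdiff x y) (hwF x)
        have hts := Summable.tsum_le_tsum hterm hsum1 hsum2
        have hge := sum_ge_of_super p b m V w x (hm x) (hws x)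
        have hVx : V x ≤ 0 := hKV x hxK
        have hnn : 0 ≤ -(m x * (V x * spow (p-1) (w x))) := by
          have h1 : V x * spow (p-1) (w x) ≤ 0 :=
            mul_nonpos_of_nonpos_of_nonneg hVx (spow_nonneg' (hwpos x).le)
          nlinarith [hm x]
        unfold pLap
        apply mul_nonneg (one_div_nonneg.mpr (hm x).le)
        linarith
    obtain ⟨c, hc⟩ := hrec s hsF hs0 hsne hsup
    refine ⟨c, ?_, ?_⟩
    · rw [← hc xt]; exact hspos xt
    · intro x
      calc c = s x := (hc x).symm
        _ ≤ w x := min_le_left _ _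
  · -- K empty
    have hVle : ∀ x, V x ≤ 0 := fun x => hKV x (fun hx => hK ⟨x, hx⟩)
    have hsup : ∀ x, 0 ≤ pLap p b m w x := by
      intro x
      have h0 := hws x
      unfold schrodOp at h0
      have h1 : V x * spow (p-1) (w x) ≤ 0 :=
        mul_nonpos_of_nonpos_of_nonneg (hVle x) (spow_nonneg' (hwpos x).le)
      linarith
    obtain ⟨c, hc⟩ := hrec w hwF hw0 hwne hsup
    haveI : Nonempty X := Infinite.nonempty X
    have x₀ := Classical.arbitrary X
    exact ⟨c, by rw [← hc x₀]; exact hwpos x₀, fun x => (hc x).ge⟩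

end LandisAux2

namespace LandisAux3

lemma aux_liminf {X : Type} [Infinite X] (u : X → ℝ) (M : ℝ) (hM : ∀ x, |u x| ≤ M)
    (hliminf : Filter.liminf u Filter.cofinite = 0) :
    (∀ a : ℝ, a < 0 → {x | u x < a}.Finite) ∧ (∀ ε : ℝ, 0 < ε → ∃ x, u x < ε) := by
  set S := {a : ℝ | ∀ᶠ x in Filter.cofinite, a ≤ u x} with hS
  have hSne : S.Nonempty := by
    refine ⟨-M - 1, ?_⟩
    show ∀ᶠ x in Filter.cofinite, -M - 1 ≤ u x
    refine Filter.Eventually.of_forall (fun x => ?_)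
    have := abs_le.mp (hM x)
    linarith [this.1]
  have hsup : sSup S = 0 := by rw [← hliminf, Filter.liminf_eq]
  constructor
  · intro a ha
    obtain ⟨s, hsS, has⟩ := exists_lt_of_lt_csSup hSne (by rw [hsup]; exact ha)
    have hsS' : ∀ᶠ x in Filter.cofinite, s ≤ u x := hsS
    have hev : ∀ᶠ x in Filter.cofinite, a ≤ u x := hsS'.mono (fun x hx => le_trans has.le hx)
    have hfin := Filter.eventually_cofinite.mp hev
    apply hfin.subset
    intro x hx
    simp only [Set.mem_setOf_eq] at hx ⊢
    intro hcon
    linarith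
  · intro ε hε
    by_contra h
    push_neg at h
    have hbdd : BddAbove S := by
      refine ⟨M, fun a haS => ?_⟩
      have haS' : ∀ᶠ x in Filter.cofinite, a ≤ u x := haS
      have hfin := Filter.eventually_cofinite.mp haS'
      obtain ⟨x, hx⟩ := hfin.infinite_compl.nonempty
      simp only [Set.mem_compl_iff, Set.mem_setOf_eq, not_not] at hx
      exact hx.trans (le_trans (le_abs_self _) (hM x))
    have hmem : ε ∈ S := by
      show ∀ᶠ x in Filter.cofinite, ε ≤ u x
      exact Filter.Eventually.of_forall h
    have : ε ≤ sSup S := le_csSup hbdd hmem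
    rw [hsup] at this
    linarith

end LandisAux3

namespace LandisAux4
open LandisAux

lemma aux_unn {X : Type} [Infinite X] (p : ℝ) (hq : 0 < p - 1)
    (m : X → ℝ) (hm : ∀ x, 0 < m x)
    (b : X → X → ℝ) (hb : IsGraph b) (hconn : GraphConnected b) (V : X → ℝ)
    (w : X → ℝ) (hwF : inF p b w) (hwpos : ∀ x, 0 < w x)
    (hws : ∀ x, 0 ≤ schrodOp p b m V w x)
    (δ : ℝ) (hδpos : 0 < δ) (hδ : ∀ x, δ ≤ w x)
    (u : X → ℝ) (huF : inF p b u) (hharm : ∀ x, schrodOp p b m V u x = 0)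
    (hfin : ∀ a : ℝ, a < 0 → {x | u x < a}.Finite) :
    ∀ x, 0 ≤ u x := by
  obtain ⟨hbnn, hbsymm, hbdiag, hbsum⟩ := hb
  set ψ : X → ℝ := fun x => max (-u x) 0 with hψ
  have hψnn : ∀ x, 0 ≤ ψ x := fun x => le_max_right _ _
  have hψge : ∀ x, -u x ≤ ψ x := fun x => le_max_left _ _
  have hψdiff : ∀ x y, |ψ x - ψ y| ≤ |u x - u y| := by
    intro x y
    have h := abs_max_sub_max_le_abs (-u x) (-u y) 0
    have h2 : |-u x - -u y| = |u x - u y| := by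
      rw [show -u x - -u y = -(u x - u y) by ring, abs_neg]
    rw [h2] at h
    exact h
  have main : ∀ ε : ℝ, 0 < ε → ∀ x, ψ x ≤ ε * w x := by
    intro ε hε
    by_contra hcon
    push_neg at hcon
    obtain ⟨x₀, hx₀⟩ := hcon
    set F : Set X := {x | u x < -(ε * δ)} with hF
    have hεδ : 0 < ε * δ := mul_pos hε hδpos
    have hFfin : F.Finite := hfin _ (by linarith)
    have hψF : ∀ x, x ∉ F → ψ x ≤ ε * δ := by
      intro x hx
      have hx' : -(ε*δ) ≤ u x := not_lt.mp (by simpa [hF] using hx)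
      exact max_le (by linarith) (by linarith)
    have hx₀F : x₀ ∈ F := by
      by_contra hx
      have h1 : ψ x₀ ≤ ε * δ := hψF x₀ hx
      have h2 : ε * δ ≤ ε * w x₀ := mul_le_mul_of_nonneg_left (hδ x₀) hε.le
      linarith
    set Ff := hFfin.toFinset with hFf
    have hFfne : Ff.Nonempty := ⟨x₀, hFfin.mem_toFinset.mpr hx₀F⟩
    have hwε : ∀ x, 0 < ε * w x := fun x => mul_pos hε (hwpos x)
    set R := Ff.sup' hFfne (fun x => ψ x / (ε * w x)) with hR
    have hR1 : 1 < R := by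
      have h1 : ψ x₀ / (ε * w x₀) ≤ R := by
        rw [hR]
        exact Finset.le_sup' (fun x => ψ x / (ε * w x)) (hFfin.mem_toFinset.mpr hx₀F)
      have h2 : 1 < ψ x₀ / (ε * w x₀) := (one_lt_div (hwε x₀)).mpr hx₀
      linarith
    have hRpos : 0 < R := by linarith
    have hRε : 0 < R * ε := mul_pos hRpos hε
    have hle : ∀ x, ψ x ≤ R * (ε * w x) := by
      intro x
      by_cases hx : x ∈ F
      · have h1 : ψ x / (ε * w x) ≤ R := by
          rw [hR]
          exact Finset.le_sup' (fun x => ψ x / (ε * w x)) (hFfin.mem_toFinset.mpr hx)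
        exact (div_le_iff₀ (hwε x)).mp h1
      · have h1 : ψ x ≤ ε * δ := hψF x hx
        have h2 : ε * δ ≤ ε * w x := mul_le_mul_of_nonneg_left (hδ x) hε.le
        nlinarith [hwε x]
    obtain ⟨xs, hxsmem, hxseq⟩ := Finset.exists_mem_eq_sup' hFfne (fun x => ψ x / (ε * w x))
    have hxsP : ψ xs = R * (ε * w xs) := by
      have h1 : ψ xs / (ε * w xs) = R := by rw [hR]; exact hxseq.symm
      rw [div_eq_iff (hwε xs).ne'] at h1
      exact h1
    set P : Set X := {z | ψ z = R * (ε * w z)} with hP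
    have hkey : ∀ z, z ∈ P → ∀ y, 0 < b z y → y ∈ P := by
      intro z hz y hzy
      have hzeq : ψ z = R * (ε * w z) := hz
      have hψzpos : 0 < ψ z := by
        rw [hzeq]; exact mul_pos hRpos (hwε z)
      have huz : u z < 0 := by
        by_contra hcontra
        push_neg at hcontra
        have : ψ z = 0 := max_eq_right (by linarith)
        linarith
      have hψzu : ψ z = -u z := max_eq_left (by linarith)
      -- summability package
      have hsumA : Summable (fun y' => b z y' * spow (p-1) (ψ z - ψ y')) :=
        summable_bspow hq (fun y' => b z y') (fun y' => ψ z - ψ y') (fun y' => u z - u y')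
          (hbnn z) (fun y' => hψdiff z y') (huF z)
      have hsumA' : Summable (fun y' => b z y' * spow (p-1) ((-u z) - (-u y'))) :=
        summable_bspow hq (fun y' => b z y') (fun y' => (-u z) - (-u y')) (fun y' => u z - u y')
          (hbnn z) (fun y' => by
            show |(-u z) - (-u y')| ≤ |u z - u y'|
            rw [show (-u z) - (-u y') = -(u z - u y') by ring, abs_neg])
          (huF z)
      have hsumBabs : Summable (fun y' => b z y' * |R * ε * (w z - w y')| ^ (p-1)) := by
        have heq : (fun y' => b z y' * |R * ε * (w z - w y')| ^ (p-1))
            = fun y' => (R*ε)^(p-1) * (b z y' * |w z - w y'| ^ (p-1)) := by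
          funext y'
          rw [abs_mul, Real.mul_rpow (abs_nonneg _) (abs_nonneg _), abs_of_pos hRε]
          ring
        rw [heq]
        exact (hwF z).mul_left _
      have hsumB : Summable (fun y' => b z y' * spow (p-1) (R * ε * (w z - w y'))) :=
        summable_bspow hq (fun y' => b z y') (fun y' => R * ε * (w z - w y'))
          (fun y' => R * ε * (w z - w y')) (hbnn z) (fun y' => le_refl _) hsumBabs
      -- termwise B ≤ A
      have htermBA : ∀ y', b z y' * spow (p-1) (R * ε * (w z - w y'))
          ≤ b z y' * spow (p-1) (ψ z - ψ y') := by
        intro y'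
        apply mul_le_mul_of_nonneg_left _ (hbnn z y')
        apply (spow_strictMono hq).monotone
        have h1 : ψ y' ≤ R * (ε * w y') := hle y'
        have h2 : R * ε * (w z - w y') = R * (ε * w z) - R * (ε * w y') := by ring
        rw [h2, ← hzeq]
        linarith
      -- A ≤ -(m z * (V z * spow (p-1) (ψ z)))
      have hAle : (∑' y', b z y' * spow (p-1) (ψ z - ψ y'))
          ≤ -(m z * (V z * spow (p-1) (ψ z))) := by
        have hterm : ∀ y', b z y' * spow (p-1) (ψ z - ψ y')
            ≤ b z y' * spow (p-1) ((-u z) - (-u y')) := by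
          intro y'
          apply mul_le_mul_of_nonneg_left _ (hbnn z y')
          apply (spow_strictMono hq).monotone
          have := hψge y'
          rw [hψzu]
          linarith
        have h1 := Summable.tsum_le_tsum hterm hsumA hsumA'
        have h2 : (∑' y', b z y' * spow (p-1) ((-u z) - (-u y')))
            = -(∑' y', b z y' * spow (p-1) (u z - u y')) := by
          rw [← tsum_neg]
          apply tsum_congr
          intro y'
          rw [show (-u z) - (-u y') = -(u z - u y') by ring, spow_neg']
          ring
        have h3 := sum_eq_of_harm p b m V u z (hm z) (hharm z)
        have h4 : spow (p-1) (u z) = -(spow (p-1) (ψ z)) := by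
          have huψ : u z = -ψ z := by rw [hψzu]; ring
          rw [huψ, spow_neg']
        have hT : (∑' y', b z y' * spow (p-1) ((-u z) - (-u y')))
            = -(m z * (V z * spow (p-1) (ψ z))) := by
          rw [h2, h3, h4]
          ring
        rw [hT] at h1
        exact h1
      -- B ≥ same bound
      have hBge : -(m z * (V z * spow (p-1) (ψ z)))
          ≤ (∑' y', b z y' * spow (p-1) (R * ε * (w z - w y'))) := by
        have h2 : ∀ y', b z y' * spow (p-1) (R * ε * (w z - w y'))
            = (R*ε)^(p-1) * (b z y' * spow (p-1) (w z - w y')) := by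
          intro y'
          rw [spow_const_mul hq hRε]
          ring
        rw [tsum_congr h2, tsum_mul_left]
        have h3 := sum_ge_of_super p b m V w z (hm z) (hws z)
        have h4 : -(m z * (V z * spow (p-1) (ψ z)))
            = (R*ε)^(p-1) * (-(m z * (V z * spow (p-1) (w z)))) := by
          have h5 : ψ z = (R*ε) * w z := by rw [hzeq]; ring
          rw [h5, spow_const_mul hq hRε]
          ring
        rw [h4]
        exact mul_le_mul_of_nonneg_left h3 (Real.rpow_nonneg hRε.le _)
      have hBA := Summable.tsum_le_tsum htermBA hsumB hsumA
      have hABeq : (∑' y', b z y' * spow (p-1) (ψ z - ψ y'))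
          = (∑' y', b z y' * spow (p-1) (R * ε * (w z - w y'))) :=
        le_antisymm (le_trans hAle hBge) hBA
      -- termwise equality
      have htsum0 : (∑' y', (b z y' * spow (p-1) (ψ z - ψ y')
          - b z y' * spow (p-1) (R * ε * (w z - w y')))) = 0 := by
        rw [Summable.tsum_sub hsumA hsumB, hABeq, sub_self]
      have hy := Summable.le_tsum (hsumA.sub hsumB) y (fun j _ => sub_nonneg.mpr (htermBA j))
      rw [htsum0] at hy
      have h0 : b z y * spow (p-1) (ψ z - ψ y) - b z y * spow (p-1) (R * ε * (w z - w y)) = 0 :=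
        le_antisymm hy (sub_nonneg.mpr (htermBA y))
      have heq := mul_left_cancel₀ hzy.ne' (sub_eq_zero.mp h0)
      have heq2 := (spow_strictMono hq).injective heq
      show ψ y = R * (ε * w y)
      linear_combination hzeq - heq2
    have hall : ∀ z, z ∈ P := by
      intro z
      have hpath := hconn xs z
      induction hpath with
      | refl => exact hxsP
      | tail _ hyz ih => exact hkey _ ih _ hyz
    obtain ⟨z, hzF⟩ := hFfin.infinite_compl.nonempty
    have h1 : ψ z = R * (ε * w z) := hall z
    have h2 : ψ z ≤ ε * δ := hψF z hzF
    have h3 : ε * δ < R * (ε * w z) := by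
      have h4 : ε * δ ≤ ε * w z := mul_le_mul_of_nonneg_left (hδ z) hε.le
      nlinarith [hwε z]
    linarith [h1 ▸ h2]
  -- conclude
  intro x
  by_contra hcontra
  push_neg at hcontra
  have hux : 0 < -u x := by linarith
  set ε := (-u x) / (2 * w x) with hεdef
  have hε : 0 < ε := div_pos hux (by linarith [hwpos x])
  have h1 := main ε hε x
  have h2 : ψ x = -u x := max_eq_left (by linarith)
  have h3 : ε * w x = (-u x) / 2 := by
    have h2w : (2:ℝ) * w x ≠ 0 := ne_of_gt (by linarith [hwpos x])
    rw [hεdef, div_mul_eq_mul_div, div_eq_div_iff h2w two_ne_zero]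
    ring
  rw [h2, h3] at h1
  linarith

end LandisAux4

namespace LandisAux5
open LandisAux

lemma aux_final {X : Type} [Infinite X] (p : ℝ) (hq : 0 < p - 1)
    (m : X → ℝ) (hm : ∀ x, 0 < m x)
    (b : X → X → ℝ) (hb : IsGraph b) (V : X → ℝ)
    (hrec : ∀ w : X → ℝ, inF p b w → (∀ x, 0 ≤ w x) → w ≠ 0 →
      (∀ x, 0 ≤ pLap p b m w x) → ∃ c : ℝ, ∀ x, w x = c)
    (K : Set X) (hKfin : K.Finite) (hKV : ∀ x ∉ K, V x ≤ 0)
    (δ : ℝ) (hδpos : 0 < δ)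
    (u : X → ℝ) (huF : inF p b u) (hharm : ∀ x, schrodOp p b m V u x = 0)
    (hu0 : ∀ x, 0 ≤ u x)
    (hsmall : ∀ ε : ℝ, 0 < ε → ∃ x, u x < ε) :
    ∀ x, u x = 0 := by
  obtain ⟨hbnn, hbsymm, hbdiag, hbsum⟩ := hb
  haveI : Nonempty X := Infinite.nonempty X
  -- choose lam
  have hlam : ∃ lam : ℝ, 0 < lam ∧ ∀ x ∈ K, 0 < u x → δ ≤ lam * u x + δ/2 := by
    set Kp : Set X := {x ∈ K | 0 < u x} with hKp
    have hKpfin : Kp.Finite := hKfin.subset (fun x hx => hx.1)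
    by_cases hKpne : Kp.Nonempty
    · set Kf := hKpfin.toFinset with hKf
      have hKfne : Kf.Nonempty := by
        obtain ⟨x, hx⟩ := hKpne
        exact ⟨x, hKpfin.mem_toFinset.mpr hx⟩
      set μ := Kf.inf' hKfne u with hμ
      obtain ⟨xμ, hxμ, hμeq⟩ := Finset.exists_mem_eq_inf' hKfne u
      have hμpos : 0 < μ := by
        rw [hμ, hμeq]
        exact (hKpfin.mem_toFinset.mp hxμ).2
      refine ⟨(δ/2)/μ, by positivity, ?_⟩
      intro x hxK hxu
      have hxKp : x ∈ Kp := ⟨hxK, hxu⟩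
      have h1 : μ ≤ u x := Finset.inf'_le u (hKpfin.mem_toFinset.mpr hxKp)
      have h2 : (δ/2)/μ * μ ≤ (δ/2)/μ * u x :=
        mul_le_mul_of_nonneg_left h1 (by positivity)
      have h3 : (δ/2)/μ * μ = δ/2 := by field_simp
      linarith
    · exact ⟨1, one_pos, fun x hxK hxu => absurd (⟨hxK, hxu⟩ : x ∈ Kp) (fun hh => hKpne ⟨x, hh⟩)⟩
  obtain ⟨lam, hlampos, hlamK⟩ := hlam
  set s := fun x => min (lam * u x + δ/2) δ with hs
  have hsdiff : ∀ x y, |s x - s y| ≤ lam * |u x - u y| := by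
    intro x y
    have h := abs_min_sub_min_le (lam * u x + δ/2) (lam * u y + δ/2) δ
    have h2 : |(lam * u x + δ/2) - (lam * u y + δ/2)| = lam * |u x - u y| := by
      rw [show (lam * u x + δ/2) - (lam * u y + δ/2) = lam * (u x - u y) by ring,
        abs_mul, abs_of_pos hlampos]
    rw [h2] at h
    exact h
  have hsF : inF p b s := by
    intro x
    have hsum : Summable (fun y => lam ^ (p-1) * (b x y * |u x - u y| ^ (p-1))) :=
      (huF x).mul_left _
    apply Summable.of_nonneg_of_le _ _ hsum
    · intro y
      exact mul_nonneg (hbnn x y) (Real.rpow_nonneg (abs_nonneg _) _)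
    · intro y
      have h1 : |s x - s y| ^ (p-1) ≤ (lam * |u x - u y|) ^ (p-1) :=
        Real.rpow_le_rpow (abs_nonneg _) (hsdiff x y) (by linarith)
      have h2 : (lam * |u x - u y|) ^ (p-1) = lam ^ (p-1) * |u x - u y| ^ (p-1) :=
        Real.mul_rpow hlampos.le (abs_nonneg _)
      calc b x y * |s x - s y| ^ (p-1)
          ≤ b x y * (lam ^ (p-1) * |u x - u y| ^ (p-1)) := by
            rw [← h2]; exact mul_le_mul_of_nonneg_left h1 (hbnn x y)
        _ = lam ^ (p-1) * (b x y * |u x - u y| ^ (p-1)) := by ring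
  have hspos : ∀ x, 0 < s x := by
    intro x
    apply lt_min _ hδpos
    have := mul_nonneg hlampos.le (hu0 x)
    linarith
  have hs0 : ∀ x, 0 ≤ s x := fun x => (hspos x).le
  have hsne : s ≠ 0 := Function.ne_iff.mpr ⟨Classical.arbitrary X, ne_of_gt (hspos _)⟩
  have hsup : ∀ x, 0 ≤ pLap p b m s x := by
    intro x
    rcases le_or_gt δ (lam * u x + δ/2) with hcase|hcase
    · have hsx : s x = δ := min_eq_right hcase
      unfold pLap
      apply mul_nonneg (one_div_nonneg.mpr (hm x).le)
      apply tsum_nonneg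
      intro y
      apply mul_nonneg (hbnn x y)
      apply spow_nonneg'
      rw [hsx]
      have : s y ≤ δ := min_le_right _ _
      linarith
    · have hsx : s x = lam * u x + δ/2 := min_eq_left hcase.le
      have hxK : x ∈ K → u x = 0 := by
        intro hxK
        by_contra hne
        have hupos : 0 < u x := (hu0 x).lt_of_ne (Ne.symm hne)
        exact absurd (hlamK x hxK hupos) (not_le.mpr hcase)
      have hterm : ∀ y, lam ^ (p-1) * (b x y * spow (p-1) (u x - u y))
          ≤ b x y * spow (p-1) (s x - s y) := by
        intro y
        have h1 : spow (p-1) (lam * (u x - u y)) ≤ spow (p-1) (s x - s y) := by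
          apply (spow_strictMono hq).monotone
          have h2 : s y ≤ lam * u y + δ/2 := min_le_left _ _
          have h3 : lam * (u x - u y) = (lam * u x + δ/2) - (lam * u y + δ/2) := by ring
          rw [h3, hsx]
          linarith
        calc lam ^ (p-1) * (b x y * spow (p-1) (u x - u y))
            = b x y * spow (p-1) (lam * (u x - u y)) := by
              rw [spow_const_mul hq hlampos]; ring
          _ ≤ b x y * spow (p-1) (s x - s y) := mul_le_mul_of_nonneg_left h1 (hbnn x y)
      have hsumU : Summable (fun y => b x y * spow (p-1) (u x - u y)) :=
        summable_bspow hq (fun y => b x y) (fun y => u x - u y) (fun y => u x - u y)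
          (hbnn x) (fun y => le_refl _) (huF x)
      have hsum1 : Summable (fun y => lam ^ (p-1) * (b x y * spow (p-1) (u x - u y))) :=
        hsumU.mul_left _
      have hsum2 : Summable (fun y => b x y * spow (p-1) (s x - s y)) := by
        apply summable_bspow hq (fun y => b x y) (fun y => s x - s y)
          (fun y => lam * (u x - u y)) (hbnn x)
        · intro y
          show |s x - s y| ≤ |lam * (u x - u y)|
          rw [abs_mul, abs_of_pos hlampos]
          exact hsdiff x y
        · have heq : (fun y => b x y * |lam * (u x - u y)| ^ (p-1))
              = fun y => lam ^ (p-1) * (b x y * |u x - u y| ^ (p-1)) := by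
            funext y
            rw [abs_mul, abs_of_pos hlampos, Real.mul_rpow hlampos.le (abs_nonneg _)]
            ring
          rw [heq]
          exact (huF x).mul_left _
      have hts := Summable.tsum_le_tsum hterm hsum1 hsum2
      rw [tsum_mul_left] at hts
      have hU := sum_eq_of_harm p b m V u x (hm x) (hharm x)
      have hnn : 0 ≤ lam ^ (p-1) * ∑' y, b x y * spow (p-1) (u x - u y) := by
        rw [hU]
        apply mul_nonneg (Real.rpow_nonneg hlampos.le _)
        rcases Classical.em (x ∈ K) with hxK'|hxK'
        · rw [hxK hxK', spow_zero']
          simp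
        · have hV : V x ≤ 0 := hKV x hxK'
          have h1 : V x * spow (p-1) (u x) ≤ 0 :=
            mul_nonpos_of_nonpos_of_nonneg hV (spow_nonneg' (hu0 x))
          nlinarith [hm x]
      unfold pLap
      apply mul_nonneg (one_div_nonneg.mpr (hm x).le)
      linarith
  obtain ⟨c₀, hc₀⟩ := hrec s hsF hs0 hsne hsup
  have hc₀le : c₀ ≤ δ/2 := by
    by_contra h
    push_neg at h
    obtain ⟨x, hx⟩ := hsmall ((c₀ - δ/2)/lam) (div_pos (by linarith) hlampos)
    have h1 : s x ≤ lam * u x + δ/2 := min_le_left _ _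
    rw [hc₀ x] at h1
    have h2 : lam * u x < lam * ((c₀ - δ/2)/lam) := mul_lt_mul_of_pos_left hx hlampos
    have h3 : lam * ((c₀ - δ/2)/lam) = c₀ - δ/2 := by field_simp
    linarith
  intro x
  have h1 : s x = c₀ := hc₀ x
  have h2 : s x = lam * u x + δ/2 := by
    rcases min_choice (lam * u x + δ/2) δ with h|h
    · rw [hs]; exact h
    · exfalso
      have : s x = δ := by rw [hs]; exact h
      rw [h1] at this
      linarith
  have h3 : lam * u x + δ/2 = c₀ := by rw [← h2, h1]
  have h4 : lam * u x ≤ 0 := by linarith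
  have h5 : u x ≤ 0 := by
    by_contra hc
    push_neg at hc
    nlinarith
  linarith [hu0 x]

end LandisAux5


/-- Landis theorem on `p`-recurrent graphs, `1 < p ≤ 2`. -/
theorem landis_recurrent
    {X : Type} [Countable X] [Infinite X]
    (p : ℝ) (hp1 : 1 < p) (hp2 : p ≤ 2)
    (m : X → ℝ) (hm : ∀ x, 0 < m x)
    (b : X → X → ℝ) (hb : IsGraph b) (hconn : GraphConnected b)
    (hrec : ∀ w : X → ℝ, inF p b w → (∀ x, 0 ≤ w x) → w ≠ 0 →
      (∀ x, 0 ≤ pLap p b m w x) → ∃ c : ℝ, ∀ x, w x = c)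
    (V : X → ℝ) (hpos : IsPositiveOp p b m V)
    (hVout : ∃ K : Set X, K.Finite ∧ ∀ x ∉ K, V x ≤ 0)
    (u : X → ℝ) (hu : inF p b u)
    (hharm : ∀ x, schrodOp p b m V u x = 0)
    (hbdd : ∃ M : ℝ, ∀ x, |u x| ≤ M)
    (hliminf : liminf u cofinite = 0) :
    ∀ x, u x = 0 := by
  have hq : 0 < p - 1 := by linarith
  obtain ⟨M, hM⟩ := hbdd
  obtain ⟨K, hKfin, hKV⟩ := hVout
  obtain ⟨w, hwF, hw0, hwne, hws⟩ := hpos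
  have hwpos := LandisAux.aux_wpos p hq m hm b hb hconn V w hwF hw0 hwne hws
  obtain ⟨δ, hδpos, hδ⟩ :=
    LandisAux2.aux_wlb p hq m hm b hb V hrec K hKfin hKV w hwF hwpos hws
  obtain ⟨hfin, hsmall⟩ := LandisAux3.aux_liminf u M hM hliminf
  have hu0 := LandisAux4.aux_unn p hq m hm b hb hconn V w hwF hwpos hws δ hδpos hδ
    u hu hharm hfin
  exact LandisAux5.aux_final p hq m hm b hb V hrec K hKfin hKV δ hδpos
    u hu hharm hu0 hsmall
end
end

section
/- Khasminskii-type criterion on trees: Let d ≥ 2 be an integer, p > 1, and let 𝕋_d be the d-regular tree with standard weights and m ≡ 1, rooted at o. Let u > 0 satisfy (Δ_p + 1)[u] = 0 on X ∖ {o} and u(x) → 0 as |x| → ∞ (i.e., for every ε > 0 there is R such that u(x) < ε whenever |x| ≥ R). Then for every finite set K ∋ o and every v > 0 with (Δ_p + 1)[v] ≥ 0 on X∖K and u ≤ v on K, one has u ≤ v on X∖K; that is, u is a positive solution of (Δ_p+1)[u] = 0 of minimal growth at infinity. -/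
open Real Filter

noncomputable section

attribute [local instance] Classical.propDecidable

lemma spow_lt_spow {r : ℝ} (hr : 0 < r) {a c : ℝ} (ha : 0 < a) (hac : a < c) :
    spow r a < spow r c := by
  rw [spow_of_pos ha, spow_of_pos (ha.trans hac)]
  exact Real.rpow_lt_rpow ha.le hac hr

/-- Khasminskii-type criterion on `d`-regular trees. -/
theorem khasminskii_tree
    {X : Type} [Countable X] [Infinite X]
    (p : ℝ) (hp : 1 < p) (d : ℕ) (hd : 2 ≤ d)
    (b : X → X → ℝ) (o : X) (ℓ : X → ℕ) (htree : IsRegularTree d b o ℓ)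
    (u : X → ℝ) (hupos : ∀ x, 0 < u x)
    (huharm : ∀ x, x ≠ o → schrodOp p b (fun _ => 1) (fun _ => 1) u x = 0)
    (hdecay : ∀ ε : ℝ, 0 < ε → ∃ R : ℕ, ∀ x, R ≤ ℓ x → u x < ε) :
    ∀ K : Set X, K.Finite → o ∈ K →
      ∀ v : X → ℝ, (∀ x, 0 < v x) →
        (∀ x ∉ K, 0 ≤ schrodOp p b (fun _ => 1) (fun _ => 1) v x) →
        (∀ x ∈ K, u x ≤ v x) →
        ∀ x ∉ K, u x ≤ v x := by
  obtain ⟨hsym, hdiag, h01, hℓo, hfwd, hbwd, hstep⟩ := htree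
  have hr : 0 < p - 1 := by linarith
  have hbnn : ∀ x y, 0 ≤ b x y := by
    intro x y; rcases h01 x y with h | h <;> simp [h]
  -- forward neighbor sets are finite
  have hfwdfin : ∀ x, {y | b x y = 1 ∧ ℓ y = ℓ x + 1}.Finite := by
    intro x
    by_contra h
    have := Set.Infinite.ncard h
    rw [hfwd x] at this
    omega
  -- backward neighbor sets are finite
  have hbwdfin : ∀ x, {y | b x y = 1 ∧ ℓ y + 1 = ℓ x}.Finite := by
    intro x
    rcases eq_or_ne x o with rfl | hx
    · apply Set.Finite.subset Set.finite_empty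
      intro y hy
      simp only [Set.mem_setOf_eq, hℓo] at hy
      omega
    · by_contra h
      have := Set.Infinite.ncard h
      rw [hbwd x hx] at this; omega
  -- supports of rows of b are finite
  have hsupp : ∀ x, {y | b x y ≠ 0}.Finite := by
    intro x
    apply ((hfwdfin x).union (hbwdfin x)).subset
    intro y hy
    have h1 : b x y = 1 := (h01 x y).resolve_left hy
    rcases hstep x y h1 with h | h
    · exact Or.inl ⟨h1, h⟩
    · exact Or.inr ⟨h1, h.symm⟩
  -- spheres are finite
  have hsph : ∀ n, {x | ℓ x = n}.Finite := by
    intro n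
    induction n with
    | zero =>
      apply (Set.finite_singleton o).subset
      intro x hx
      by_contra hxo
      obtain ⟨y, hy⟩ := Set.nonempty_of_ncard_ne_zero
        ((hbwd x hxo) ▸ (one_ne_zero : (1:ℕ) ≠ 0))
      simp only [Set.mem_setOf_eq] at hx hy
      omega
    | succ n ih =>
      apply Set.Finite.subset (ih.biUnion (fun x _ => hfwdfin x))
      intro z hz
      simp only [Set.mem_setOf_eq] at hz
      have hzo : z ≠ o := fun h => by rw [h, hℓo] at hz; omega
      obtain ⟨w, hw⟩ := Set.nonempty_of_ncard_ne_zero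
        ((hbwd z hzo) ▸ (one_ne_zero : (1:ℕ) ≠ 0))
      simp only [Set.mem_setOf_eq] at hw
      refine Set.mem_biUnion (show ℓ w = n by omega) ?_
      exact ⟨by rw [hsym]; exact hw.1, by omega⟩
  -- balls are finite
  have hball : ∀ R : ℕ, {x | ℓ x < R}.Finite := by
    intro R
    apply Set.Finite.subset ((Set.finite_Iio R).biUnion (fun n _ => hsph n))
    intro x hx
    exact Set.mem_biUnion (show ℓ x ∈ Set.Iio R from hx) rfl
  intro K hKfin hoK v hvpos hvsup huv
  by_contra h
  push_neg at h
  obtain ⟨x₁, hx₁K, hx₁⟩ := h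
  set m₁ := u x₁ - v x₁ with hm₁def
  have hm₁ : 0 < m₁ := by simp only [hm₁def]; linarith
  obtain ⟨R, hR⟩ := hdecay m₁ hm₁
  set T := {x | x ∉ K ∧ m₁ ≤ u x - v x} with hTdef
  have hTfin : T.Finite := by
    apply (hball R).subset
    intro x hx
    simp only [hTdef, Set.mem_setOf_eq] at hx
    simp only [Set.mem_setOf_eq]
    by_contra hxR
    have := hR x (by omega)
    have := hvpos x
    linarith [hx.2]
  have hTne : T.Nonempty := ⟨x₁, hx₁K, le_refl _⟩
  obtain ⟨x₀, hx₀T, hx₀max⟩ := hTfin.toFinset.exists_max_image (fun x => u x - v x)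
    (by rwa [Set.Finite.toFinset_nonempty])
  rw [Set.Finite.mem_toFinset] at hx₀T
  obtain ⟨hx₀K, hx₀m⟩ := hx₀T
  set M := u x₀ - v x₀ with hMdef
  have hMpos : 0 < M := lt_of_lt_of_le hm₁ hx₀m
  have hM : ∀ y, u y - v y ≤ M := by
    intro y
    by_cases hyK : y ∈ K
    · have := huv y hyK; linarith
    · by_cases hy : m₁ ≤ u y - v y
      · exact hx₀max y (Set.Finite.mem_toFinset _ |>.mpr ⟨hyK, hy⟩)
      · push_neg at hy; linarith
  have hx₀o : x₀ ≠ o := fun h => hx₀K (h ▸ hoK)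
  -- summability of the relevant series
  have hsummable : ∀ f : X → ℝ, Summable (fun y => b x₀ y * f y) := by
    intro f
    apply summable_of_ne_finset_zero (s := (hsupp x₀).toFinset)
    intro y hy
    rw [Set.Finite.mem_toFinset] at hy
    simp only [Set.mem_setOf_eq, not_not] at hy
    rw [hy, zero_mul]
  -- termwise comparison of the p-Laplacian sums
  have hterm : ∀ y, b x₀ y * spow (p - 1) (v x₀ - v y)
      ≤ b x₀ y * spow (p - 1) (u x₀ - u y) := by
    intro y
    apply mul_le_mul_of_nonneg_left _ (hbnn x₀ y)
    apply spow_mono hr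
    have := hM y
    linarith
  have hsum : (∑' y, b x₀ y * spow (p - 1) (v x₀ - v y))
      ≤ ∑' y, b x₀ y * spow (p - 1) (u x₀ - u y) :=
    Summable.tsum_le_tsum hterm (hsummable _) (hsummable _)
  have hu0 := huharm x₀ hx₀o
  have hv0 := hvsup x₀ hx₀K
  simp only [schrodOp, pLap, one_mul, div_one, ne_eq] at hu0 hv0
  have hlt : spow (p - 1) (v x₀) < spow (p - 1) (u x₀) :=
    spow_lt_spow hr (hvpos x₀) (by linarith)
  linarith
end
end
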